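/- arXiv:2212.04932 — 3 statements merged into one kernel-verified Lean document; each statement's English description precedes it below -/
import Mathlib

section
/- For every positive integer m, the set W(S_{2m}) of Wachs permutations of the symmetric group S_{2m} is a subgroup of S_{2m}, and it is isomorphic as a group to the semidirect product of S_m acting by coordinate permutation on (Z/2Z)^m (equivalently, to the wreath product S_2 ≀ S_m, i.e. to the hyperoctahedral group B_m). -/
open Finset
open scoped Classical

namespace WachsPaper

/-! ### Type A (symmetric group) basics -/

/-- `w` is a permutation of `{1,…,n}` (it fixes everything outside `[1,n]`). -/
def PermOn (n : ℕ) (w : Equiv.Perm ℕ) : Prop :=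
  ∀ i : ℕ, i ∉ Finset.Icc 1 n → w i = i

/-- the involution `i ↦ i*` on `[n]`. -/
def star (n i : ℕ) : ℕ :=
  if i % 2 = 0 then i - 1 else if i + 1 ≤ n then i + 1 else n

/-- Wachs permutations of `S_n`. -/
def IsWachs (n : ℕ) (w : Equiv.Perm ℕ) : Prop :=
  PermOn n w ∧ ∀ i ∈ Finset.Icc 1 (n - 1),
    |(w⁻¹ i : ℤ) - (w⁻¹ (star n i) : ℤ)| ≤ 1

/-- the increasing rearrangement of `w(1),…,w(k)`. -/
def sortedPrefix (w : ℕ → ℕ) (k : ℕ) : List ℕ :=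
  Finset.sort ((Finset.Icc 1 k).image w) (· ≤ ·)

/-- Bruhat order on `S_n` via the tableau criterion. -/
def bruhatLE (n : ℕ) (u v : Equiv.Perm ℕ) : Prop :=
  ∀ k ∈ Finset.Icc 1 n, ∀ i : ℕ,
    (sortedPrefix (⇑u) k).getD i 0 ≤ (sortedPrefix (⇑v) k).getD i 0

def bruhatLT (n : ℕ) (u v : Equiv.Perm ℕ) : Prop :=
  bruhatLE n u v ∧ u ≠ v

/-- `v` covers `u` in the Bruhat order restricted to the set of permutations
satisfying `A`. -/
def covInduced (n : ℕ) (A : Equiv.Perm ℕ → Prop) (u v : Equiv.Perm ℕ) : Prop :=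
  A u ∧ A v ∧ bruhatLT n u v ∧
    ∀ z, A z → bruhatLT n u z → ¬ bruhatLT n z v

/-- number of inversions of `w` on `[1,n]` (Coxeter length on `S_n`). -/
def len (n : ℕ) (w : ℕ → ℕ) : ℕ :=
  (((Finset.Icc 1 n) ×ˢ (Finset.Icc 1 n)).filter
    (fun p => p.1 < p.2 ∧ w p.2 < w p.1)).card

/-- `v = φ_{2m}⁻¹(τ,T)`, i.e. `v` corresponds to the pair `(τ,T)` under `φ_{2m}`. -/
def phiRel (m : ℕ) (τ : Equiv.Perm ℕ) (T : Finset ℕ) (v : Equiv.Perm ℕ) : Prop :=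
  ∀ i ∈ Finset.Icc 1 m,
    if i ∈ T then v (2*i - 1) = 2 * τ i ∧ v (2*i) = 2 * τ i - 1
    else v (2*i - 1) = 2 * τ i - 1 ∧ v (2*i) = 2 * τ i

/-- position of the value `n` in `v`. -/
def pos (n : ℕ) (v : Equiv.Perm ℕ) : ℕ := v⁻¹ n

/-- `w = χ_n(v)`: `w` is obtained from `v` by deleting the value `n`. -/
def chiRel (n : ℕ) (v w : Equiv.Perm ℕ) : Prop :=
  PermOn (n - 1) w ∧ ∀ k ∈ Finset.Icc 1 (n - 1),
    w k = if k < pos n v then v k else v (k + 1)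

/-- `v = φ_{2m+1}⁻¹(i,τ,T)`. -/
def phiOddRel (m i : ℕ) (τ : Equiv.Perm ℕ) (T : Finset ℕ) (v : Equiv.Perm ℕ) : Prop :=
  pos (2*m+1) v = 2*i - 1 ∧ ∃ w : Equiv.Perm ℕ, chiRel (2*m+1) v w ∧ phiRel m τ T w

def chiVal (n : ℕ) (v : Equiv.Perm ℕ) (k : ℕ) : ℕ :=
  if k < pos n v then v k else v (k + 1)

/-- the underlying permutation `f_n(v) ∈ S_{⌊n/2⌋}` of a Wachs permutation `v`,
as a function. -/
def fMap (n : ℕ) (v : Equiv.Perm ℕ) : ℕ → ℕ :=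
  if n % 2 = 0 then fun i => (v (2*i - 1) + 1) / 2
  else fun i => (chiVal n v (2*i - 1) + 1) / 2

/-- `ℓ_W(v) = ℓ(v) - ℓ(f_n(v))`. -/
def lenW (n : ℕ) (v : Equiv.Perm ℕ) : ℕ := len n ⇑v - len (n / 2) (fMap n v)

def revFun (n i : ℕ) : ℕ := if 1 ≤ i ∧ i ≤ n then n + 1 - i else i

lemma revFun_invol (n : ℕ) : Function.Involutive (revFun n) := by
  intro i; unfold revFun; split_ifs <;> omega

/-- the maximal element `n … 3 2 1` of `S_n`. -/
def rev (n : ℕ) : Equiv.Perm ℕ := (revFun_invol n).toPerm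

/-- right weak order on `S_n`. -/
def weakLE (n : ℕ) (u v : Equiv.Perm ℕ) : Prop :=
  len n ⇑v = len n ⇑u + len n ⇑(u⁻¹ * v)

/-! ### Type B (hyperoctahedral group) basics -/

/-- membership in the window `[±n] = {-n,…,-1,1,…,n}`. -/
def inWindow (n : ℕ) (i : ℤ) : Prop :=
  (1 ≤ i ∧ i ≤ (n : ℤ)) ∨ (-(n : ℤ) ≤ i ∧ i ≤ -1)

instance (n : ℕ) (i : ℤ) : Decidable (inWindow n i) := by
  unfold inWindow; infer_instance

/-- `w` is an element of the hyperoctahedral group `B_n`, viewed as a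
permutation of `ℤ` with `w(-i) = -w(i)` fixing everything outside `[±n]`. -/
def PermOnB (n : ℕ) (w : Equiv.Perm ℤ) : Prop :=
  (∀ i : ℤ, w (-i) = - w i) ∧ ∀ i : ℤ, ¬ inWindow n i → w i = i

/-- signed Wachs permutations of `B_n`. -/
def IsSignedWachs (n : ℕ) (w : Equiv.Perm ℤ) : Prop :=
  PermOnB n w ∧ ∀ i ∈ Finset.Icc 1 (n - 1),
    |w⁻¹ (i : ℤ) - w⁻¹ ((star n i : ℕ) : ℤ)| ≤ 1

noncomputable def sortedPrefixB (n : ℕ) (w : ℤ → ℤ) (k : ℤ) : List ℤ :=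
  Finset.sort (((Finset.Icc (-(n : ℤ)) k).erase 0).image w) (· ≤ ·)

/-- Bruhat order on `B_n`, via the tableau criterion for the symmetric group
on `[±n]` under the natural embedding. -/
def bruhatLEB (n : ℕ) (u v : Equiv.Perm ℤ) : Prop :=
  ∀ k : ℤ, ∀ i : ℕ,
    (sortedPrefixB n (⇑u) k).getD i 0 ≤ (sortedPrefixB n (⇑v) k).getD i 0

def bruhatLTB (n : ℕ) (u v : Equiv.Perm ℤ) : Prop := bruhatLEB n u v ∧ u ≠ v

def covInducedB (n : ℕ) (A : Equiv.Perm ℤ → Prop) (u v : Equiv.Perm ℤ) : Prop :=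
  A u ∧ A v ∧ bruhatLTB n u v ∧ ∀ z, A z → bruhatLTB n u z → ¬ bruhatLTB n z v

noncomputable def invB (n : ℕ) (w : ℤ → ℤ) : ℕ :=
  (((Finset.Icc (1:ℤ) (n:ℤ)) ×ˢ (Finset.Icc (1:ℤ) (n:ℤ))).filter
    (fun p => p.1 < p.2 ∧ w p.2 < w p.1)).card

noncomputable def negB (n : ℕ) (w : ℤ → ℤ) : ℕ :=
  ((Finset.Icc (1:ℤ) (n:ℤ)).filter (fun i => w i < 0)).card

noncomputable def nspB (n : ℕ) (w : ℤ → ℤ) : ℕ :=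
  (((Finset.Icc (1:ℤ) (n:ℤ)) ×ˢ (Finset.Icc (1:ℤ) (n:ℤ))).filter
    (fun p => p.1 < p.2 ∧ w p.1 + w p.2 < 0)).card

/-- Coxeter length on `B_n`: `ℓ_B = inv + neg + nsp`. -/
noncomputable def lenB (n : ℕ) (w : ℤ → ℤ) : ℕ := invB n w + negB n w + nspB n w

/-- indicator `χ(P) ∈ {0,1}`. -/
def chiZ (P : Prop) [Decidable P] : ℤ := if P then 1 else 0

/-- `v = φ⁻¹(σ,T)` for `B_{2m}`. -/
def phiBRel (m : ℕ) (σ : Equiv.Perm ℤ) (T : Finset ℕ) (v : Equiv.Perm ℤ) : Prop :=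
  ∀ i ∈ Finset.Icc 1 m,
    if i ∈ T then
      v (2*(i:ℤ) - 1) = 2 * σ (i:ℤ) + chiZ (σ (i:ℤ) < 0) ∧
      v (2*(i:ℤ)) = 2 * σ (i:ℤ) - chiZ (0 < σ (i:ℤ))
    else
      v (2*(i:ℤ) - 1) = 2 * σ (i:ℤ) - chiZ (0 < σ (i:ℤ)) ∧
      v (2*(i:ℤ)) = 2 * σ (i:ℤ) + chiZ (σ (i:ℤ) < 0)

/-- the signed reflection `(a,b)_B`. -/
def sgnRefl (a b : ℤ) : Equiv.Perm ℤ :=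
  if a = -b then Equiv.swap a (-a) else Equiv.swap a b * Equiv.swap (-a) (-b)

/-- the coatom `c(v)` of Theorem 4.9. -/
def cB (m : ℕ) (v : Equiv.Perm ℤ) : Equiv.Perm ℤ :=
  if v⁻¹ (2*(m:ℤ)+1) = -1 then v * Equiv.swap (-1) 1
  else if v (v⁻¹ (2*(m:ℤ)+1) + 2) < v (v⁻¹ (2*(m:ℤ)+1) + 1) then
    v * sgnRefl (v⁻¹ (2*(m:ℤ)+1) + 1) (v⁻¹ (2*(m:ℤ)+1) + 2)
  else v * sgnRefl (v⁻¹ (2*(m:ℤ)+1)) (v⁻¹ (2*(m:ℤ)+1) + 2)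

/-- value of `v̄` (the element of `W(B_{2m})` obtained from `v ∈ W(B_{2m+1})` by
deleting the entries `±(2m+1)`) at a positive position `k`. -/
def barVal (m : ℕ) (v : Equiv.Perm ℤ) (k : ℤ) : ℤ :=
  if k < |v⁻¹ (2*(m:ℤ)+1)| then v k else v (k + 1)

def toHalf (x : ℤ) : ℤ := if 0 < x then (x + 1) / 2 else -((-x + 1) / 2)

/-- the underlying signed permutation `σ ∈ B_{⌊n/2⌋}` of `v ∈ W(B_n)`, as a function. -/
def fMapB (n : ℕ) (v : Equiv.Perm ℤ) : ℤ → ℤ :=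
  if n % 2 = 0 then fun i => toHalf (v (2*i - 1))
  else fun i => toHalf (barVal (n / 2) v (2*i - 1))

/-- `ℓ_W(v) = ℓ_B(v) - ℓ_B(σ)` for a signed Wachs permutation `v`. -/
noncomputable def lenWB (n : ℕ) (v : Equiv.Perm ℤ) : ℕ := lenB n ⇑v - lenB (n / 2) (fMapB n v)

/-- `v = (j,σ,S)` for `v ∈ W(B_{2m+1})`. -/
def phiBOddRel (m : ℕ) (j : ℤ) (σ : Equiv.Perm ℤ) (S : Finset ℕ) (v : Equiv.Perm ℤ) : Prop :=
  (v⁻¹ (2*(m:ℤ)+1) = if 0 < j then 2*j - 1 else 2*j + 1) ∧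
  ∃ w : Equiv.Perm ℤ, PermOnB (2*m) w ∧
    (∀ k ∈ Finset.Icc (1:ℤ) (2*(m:ℤ)), w k = barVal m v k) ∧ phiBRel m σ S w

def w0BFun (n : ℕ) (i : ℤ) : ℤ := if inWindow n i then -i else i

lemma w0BFun_invol (n : ℕ) : Function.Involutive (w0BFun n) := by
  intro i; unfold w0BFun inWindow; split_ifs <;> omega

/-- the maximal element `[-1,-2,…,-n]` of `B_n`. -/
def w0B (n : ℕ) : Equiv.Perm ℤ := (w0BFun_invol n).toPerm

/-- right weak order on `B_n`. -/
def weakLEB (n : ℕ) (u v : Equiv.Perm ℤ) : Prop :=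
  lenB n ⇑v = lenB n ⇑u + lenB n ⇑(u⁻¹ * v)

/-- `S_m` acting on `(ℤ/2ℤ)^m` by permuting coordinates. -/
def coordPerm (m : ℕ) : Equiv.Perm (Fin m) →* MulAut (Fin m → Multiplicative (ZMod 2)) where
  toFun σ := MulEquiv.arrowCongr σ (MulEquiv.refl _)
  map_one' := by ext f i; rfl
  map_mul' := by intro σ τ; ext f i; rfl


/-! ### Auxiliary material for Statement 0 -/

section Aux

lemma zmod2_val_lt (x : ZMod 2) : x.val < 2 := by revert x; decide

lemma zmod2_cast_val (x : ZMod 2) : ((x.val : ℕ) : ZMod 2) = x := by revert x; decide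

lemma zmod2_add_self (x : ZMod 2) : x + x = 0 := by revert x; decide

/-- The Wachs permutation of `S_{2m}` built from `ε : (ℤ/2)^m` and `τ ∈ S_m`, as a function:
position `2k+1+r` (for `k < m`, `r < 2`) is sent to `2 τ(k) + 1 + (r + ε (τ k))`. -/
def wFun (m : ℕ) (ε : Fin m → ZMod 2) (τ : Equiv.Perm (Fin m)) : ℕ → ℕ :=
  fun i =>
    if h : 1 ≤ i ∧ i ≤ 2 * m then
      2 * (τ ⟨(i - 1) / 2, by omega⟩ : ℕ) + 1 +
        ((((i - 1) % 2 : ℕ) : ZMod 2) + ε (τ ⟨(i - 1) / 2, by omega⟩)).val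
    else i

lemma wFun_apply (m : ℕ) (ε : Fin m → ZMod 2) (τ : Equiv.Perm (Fin m)) (K r : ℕ)
    (hK : K < m) (hr : r < 2) :
    wFun m ε τ (2 * K + 1 + r) =
      2 * (τ ⟨K, hK⟩ : ℕ) + 1 + (((r : ℕ) : ZMod 2) + ε (τ ⟨K, hK⟩)).val := by
  have h : 1 ≤ 2 * K + 1 + r ∧ 2 * K + 1 + r ≤ 2 * m := by omega
  have h1 : (2 * K + 1 + r - 1) / 2 = K := by omega
  have h2 : (2 * K + 1 + r - 1) % 2 = r := by omega
  have hmk : (⟨(2 * K + 1 + r - 1) / 2, by omega⟩ : Fin m) = ⟨K, hK⟩ := by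
    exact Fin.ext h1
  simp only [wFun, dif_pos h, hmk, h2]

lemma wFun_out (m : ℕ) (ε : Fin m → ZMod 2) (τ : Equiv.Perm (Fin m)) (i : ℕ)
    (hi : ¬ (1 ≤ i ∧ i ≤ 2 * m)) : wFun m ε τ i = i := by
  simp only [wFun, dif_neg hi]

lemma wFun_mem (m : ℕ) (ε : Fin m → ZMod 2) (τ : Equiv.Perm (Fin m)) (K r : ℕ)
    (hK : K < m) (hr : r < 2) :
    1 ≤ wFun m ε τ (2 * K + 1 + r) ∧ wFun m ε τ (2 * K + 1 + r) ≤ 2 * m := by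
  rw [wFun_apply m ε τ K r hK hr]
  have h1 : (τ ⟨K, hK⟩ : ℕ) < m := (τ ⟨K, hK⟩).isLt
  have h2 := zmod2_val_lt (((r : ℕ) : ZMod 2) + ε (τ ⟨K, hK⟩))
  omega

lemma exists_decomp (m i : ℕ) (hi : 1 ≤ i ∧ i ≤ 2 * m) :
    ∃ K r, K < m ∧ r < 2 ∧ i = 2 * K + 1 + r :=
  ⟨(i - 1) / 2, (i - 1) % 2, by omega, by omega, by omega⟩

lemma wFun_comp (m : ℕ) (ε₁ ε₂ : Fin m → ZMod 2) (τ₁ τ₂ : Equiv.Perm (Fin m)) (i : ℕ) :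
    wFun m ε₁ τ₁ (wFun m ε₂ τ₂ i) =
      wFun m (fun x => ε₂ (τ₁⁻¹ x) + ε₁ x) (τ₁ * τ₂) i := by
  by_cases hi : 1 ≤ i ∧ i ≤ 2 * m
  · obtain ⟨K, r, hK, hr, rfl⟩ := exists_decomp m i hi
    rw [wFun_apply m ε₂ τ₂ K r hK hr]
    have hK2 : ((τ₂ ⟨K, hK⟩ : ℕ)) < m := (τ₂ ⟨K, hK⟩).isLt
    have hr2 : (((r : ℕ) : ZMod 2) + ε₂ (τ₂ ⟨K, hK⟩)).val < 2 := zmod2_val_lt _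
    rw [wFun_apply m ε₁ τ₁ _ _ hK2 hr2, wFun_apply m _ (τ₁ * τ₂) K r hK hr]
    have hmk : (⟨(τ₂ ⟨K, hK⟩ : ℕ), hK2⟩ : Fin m) = τ₂ ⟨K, hK⟩ := Fin.eta _ _
    rw [hmk]
    have hmul : (τ₁ * τ₂) ⟨K, hK⟩ = τ₁ (τ₂ ⟨K, hK⟩) := rfl
    rw [hmul]
    congr 1
    rw [zmod2_cast_val]
    have hinv : τ₁⁻¹ (τ₁ (τ₂ ⟨K, hK⟩)) = τ₂ ⟨K, hK⟩ := Equiv.symm_apply_apply _ _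
    rw [hinv]
    ring_nf
  · rw [wFun_out m ε₂ τ₂ i hi, wFun_out m ε₁ τ₁ i hi, wFun_out m _ _ i hi]

lemma wFun_id (m : ℕ) (i : ℕ) : wFun m (fun _ => 0) 1 i = i := by
  by_cases hi : 1 ≤ i ∧ i ≤ 2 * m
  · obtain ⟨K, r, hK, hr, rfl⟩ := exists_decomp m i hi
    rw [wFun_apply m _ 1 K r hK hr]
    have h1 : ((1 : Equiv.Perm (Fin m)) ⟨K, hK⟩ : ℕ) = K := rfl
    have h2 : (((r : ℕ) : ZMod 2) + 0).val = r := by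
      interval_cases r <;> decide
    rw [h1, h2]
  · exact wFun_out m _ _ i hi

/-- `wFun` as a permutation of `ℕ`. -/
def wEquiv (m : ℕ) (ε : Fin m → ZMod 2) (τ : Equiv.Perm (Fin m)) : Equiv.Perm ℕ where
  toFun := wFun m ε τ
  invFun := wFun m (fun x => ε (τ x)) τ.symm
  left_inv := by
    intro i
    rw [wFun_comp]
    have h1 : (τ.symm * τ : Equiv.Perm (Fin m)) = 1 := by
      ext x; simp
    have h2 : (fun x => ε (τ.symm⁻¹ x) + ε (τ x)) = (fun _ : Fin m => (0 : ZMod 2)) := by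
      funext x
      have hts : (τ.symm⁻¹ : Equiv.Perm (Fin m)) x = τ x := rfl
      rw [hts]
      exact zmod2_add_self _
    rw [h1, h2, wFun_id]
  right_inv := by
    intro i
    rw [wFun_comp]
    have h1 : (τ * τ.symm : Equiv.Perm (Fin m)) = 1 := by
      ext x; simp
    have h2 : (fun x => ε (τ (τ⁻¹ x)) + ε x) = (fun _ : Fin m => (0 : ZMod 2)) := by
      funext x
      have : τ (τ⁻¹ x) = x := Equiv.apply_symm_apply _ _
      rw [this]
      exact zmod2_add_self _
    rw [h1, h2, wFun_id]

lemma wEquiv_apply (m : ℕ) (ε : Fin m → ZMod 2) (τ : Equiv.Perm (Fin m)) (i : ℕ) :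
    wEquiv m ε τ i = wFun m ε τ i := rfl

lemma wEquiv_inv_apply (m : ℕ) (ε : Fin m → ZMod 2) (τ : Equiv.Perm (Fin m)) (i : ℕ) :
    (wEquiv m ε τ)⁻¹ i = wFun m (fun x => ε (τ x)) τ.symm i := rfl

/-- The homomorphism from the semidirect product into `S_∞`. -/
def Phi (m : ℕ) :
    SemidirectProduct (Fin m → Multiplicative (ZMod 2)) (Equiv.Perm (Fin m)) (coordPerm m)
      →* Equiv.Perm ℕ where
  toFun p := wEquiv m (fun x => Multiplicative.toAdd (p.left x)) p.right
  map_one' := by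
    ext i
    show wFun m (fun x => Multiplicative.toAdd
        ((1 : SemidirectProduct (Fin m → Multiplicative (ZMod 2)) (Equiv.Perm (Fin m))
          (coordPerm m)).left x))
        ((1 : SemidirectProduct (Fin m → Multiplicative (ZMod 2)) (Equiv.Perm (Fin m))
          (coordPerm m)).right) i = (1 : Equiv.Perm ℕ) i
    have h : (fun x => Multiplicative.toAdd
        ((1 : SemidirectProduct (Fin m → Multiplicative (ZMod 2)) (Equiv.Perm (Fin m))
          (coordPerm m)).left x)) = (fun _ : Fin m => (0 : ZMod 2)) := by
      funext x; simp
    have h2 : ((1 : SemidirectProduct (Fin m → Multiplicative (ZMod 2)) (Equiv.Perm (Fin m))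
        (coordPerm m)).right) = 1 := rfl
    rw [h, h2, wFun_id]
    rfl
  map_mul' a b := by
    ext i
    show wFun m (fun x => Multiplicative.toAdd ((a * b).left x)) ((a * b).right) i =
      wFun m (fun x => Multiplicative.toAdd (a.left x)) a.right
        (wFun m (fun x => Multiplicative.toAdd (b.left x)) b.right i)
    rw [wFun_comp]
    have hR : (a * b).right = a.right * b.right := rfl
    have hL : (fun x => Multiplicative.toAdd ((a * b).left x)) =
        (fun x => Multiplicative.toAdd (b.left (a.right⁻¹ x)) +
          Multiplicative.toAdd (a.left x)) := by
      funext x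
      have h1 : (a * b).left x = a.left x * (coordPerm m a.right) (b.left) x := rfl
      rw [h1]
      have hc : (coordPerm m a.right) (b.left) x = b.left (a.right.symm x) := rfl
      rw [hc]
      have hsymm : a.right.symm x = a.right⁻¹ x := rfl
      rw [hsymm, toAdd_mul]
      ring
    rw [hR, hL]

lemma Phi_injective (m : ℕ) : Function.Injective (Phi m) := by
  rw [injective_iff_map_eq_one]
  intro p hp
  have key : ∀ k : Fin m, p.right k = k ∧ Multiplicative.toAdd (p.left (p.right k)) = 0 := by
    intro k
    have h0 : wEquiv m (fun x => Multiplicative.toAdd (p.left x)) p.right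
        (2 * (k : ℕ) + 1 + 0) = 2 * (k : ℕ) + 1 + 0 := by
      have h1 := congrArg (fun e : Equiv.Perm ℕ => e (2 * (k : ℕ) + 1 + 0)) hp
      simp only [Equiv.Perm.one_apply] at h1
      exact h1
    rw [wEquiv_apply, wFun_apply m _ p.right (k : ℕ) 0 k.isLt (by omega)] at h0
    simp only [Fin.eta] at h0
    have hval := zmod2_val_lt (((0 : ℕ) : ZMod 2) + Multiplicative.toAdd (p.left (p.right k)))
    constructor
    · exact Fin.ext (by omega)
    · have hv0 : (((0 : ℕ) : ZMod 2) + Multiplicative.toAdd (p.left (p.right k))).val = 0 := by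
        omega
      revert hv0
      generalize Multiplicative.toAdd (p.left (p.right k)) = x
      revert x; decide
  have hτ : p.right = 1 := Equiv.ext fun k => (key k).1
  have hε : p.left = 1 := by
    funext k
    have h2 := (key k).2
    rw [(key k).1] at h2
    have h3 : p.left k = Multiplicative.ofAdd 0 := by
      rw [← h2]
      exact (ofAdd_toAdd _).symm
    rw [h3]
    rfl
  exact SemidirectProduct.ext hε hτ

lemma star_odd (m J : ℕ) (hJ : J < m) : star (2 * m) (2 * J + 1) = 2 * J + 2 := by
  unfold star
  rw [if_neg (by omega), if_pos (by omega)]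

lemma star_even (m J : ℕ) (hJ : J < m) : star (2 * m) (2 * J + 2) = 2 * J + 1 := by
  unfold star
  rw [if_pos (by omega)]
  omega

lemma wEquiv_isWachs (m : ℕ) (ε : Fin m → ZMod 2) (τ : Equiv.Perm (Fin m)) :
    IsWachs (2 * m) (wEquiv m ε τ) := by
  constructor
  · intro i hi
    rw [Finset.mem_Icc] at hi
    exact wFun_out m ε τ i (by omega)
  · intro i hi
    rw [Finset.mem_Icc] at hi
    obtain ⟨J, hJ, hcase⟩ : ∃ J, J < m ∧ (i = 2 * J + 1 ∨ i = 2 * J + 2) :=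
      ⟨(i - 1) / 2, by omega, by omega⟩
    have e0 : (wEquiv m ε τ)⁻¹ (2 * J + 1) =
        2 * (τ.symm ⟨J, hJ⟩ : ℕ) + 1 +
          ((((0 : ℕ) : ZMod 2)) + ε (τ (τ.symm ⟨J, hJ⟩))).val := by
      rw [wEquiv_inv_apply]
      exact wFun_apply m _ τ.symm J 0 hJ (by omega)
    have e1 : (wEquiv m ε τ)⁻¹ (2 * J + 2) =
        2 * (τ.symm ⟨J, hJ⟩ : ℕ) + 1 +
          ((((1 : ℕ) : ZMod 2)) + ε (τ (τ.symm ⟨J, hJ⟩))).val := by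
      rw [wEquiv_inv_apply]
      have : 2 * J + 2 = 2 * J + 1 + 1 := by omega
      rw [this]
      exact wFun_apply m _ τ.symm J 1 hJ (by omega)
    have v0 := zmod2_val_lt ((((0 : ℕ) : ZMod 2)) + ε (τ (τ.symm ⟨J, hJ⟩)))
    have v1 := zmod2_val_lt ((((1 : ℕ) : ZMod 2)) + ε (τ (τ.symm ⟨J, hJ⟩)))
    rcases hcase with rfl | rfl
    · rw [star_odd m J hJ, e0, e1, abs_le]
      constructor <;> omega
    · rw [star_even m J hJ, e0, e1, abs_le]
      constructor <;> omega

lemma wachs_exists_pre (m : ℕ) (w : Equiv.Perm ℕ) (hw : IsWachs (2 * m) w) :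
    ∃ ε τ, wEquiv m ε τ = w := by
  have hfix : ∀ i, ¬ (1 ≤ i ∧ i ≤ 2 * m) → w i = i := by
    intro i hi
    exact hw.1 i (by rw [Finset.mem_Icc]; omega)
  have hmem : ∀ i, 1 ≤ i ∧ i ≤ 2 * m → 1 ≤ w i ∧ w i ≤ 2 * m := by
    intro i hi
    by_contra hcon
    have h1 : w (w i) = w i := hfix _ hcon
    have h2 : w i = i := w.injective h1
    rw [h2] at hcon
    exact hcon hi
  have hmem' : ∀ i, 1 ≤ i ∧ i ≤ 2 * m → 1 ≤ w⁻¹ i ∧ w⁻¹ i ≤ 2 * m := by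
    intro i hi
    by_contra hcon
    have h1 : w (w⁻¹ i) = w⁻¹ i := hfix _ hcon
    have h2 : w (w⁻¹ i) = i := w.apply_symm_apply i
    rw [h2] at h1
    rw [← h1] at hcon
    exact hcon hi
  have hadj : ∀ J, J < m →
      (w⁻¹ (2 * J + 2) = w⁻¹ (2 * J + 1) + 1 ∨ w⁻¹ (2 * J + 1) = w⁻¹ (2 * J + 2) + 1) := by
    intro J hJ
    have h := hw.2 (2 * J + 1) (by rw [Finset.mem_Icc]; omega)
    rw [star_odd m J hJ] at h
    have h1 := hmem' (2 * J + 1) (by omega)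
    have h2 := hmem' (2 * J + 2) (by omega)
    have hne : w⁻¹ (2 * J + 1) ≠ w⁻¹ (2 * J + 2) := by
      intro hE
      have := (Equiv.injective w⁻¹) hE
      omega
    have habs := abs_le.mp h
    omega
  have main : ∀ K, K < m → ∃ J, J < m ∧
      ((w (2 * K + 1) = 2 * J + 1 ∧ w (2 * K + 2) = 2 * J + 2) ∨
       (w (2 * K + 1) = 2 * J + 2 ∧ w (2 * K + 2) = 2 * J + 1)) := by
    intro K
    induction K using Nat.strong_induction_on with
    | _ K IH =>
      intro hK
      have hv := hmem (2 * K + 1) (by omega)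
      obtain ⟨J, hJm, hcase⟩ : ∃ J, J < m ∧
          (w (2 * K + 1) = 2 * J + 1 ∨ w (2 * K + 1) = 2 * J + 2) :=
        ⟨(w (2 * K + 1) - 1) / 2, by omega, by omega⟩
      rcases hcase with h | h
      · have ha : w⁻¹ (2 * J + 1) = 2 * K + 1 := by rw [← h]; exact w.symm_apply_apply _
        rcases hadj J hJm with hb | hb
        · refine ⟨J, hJm, Or.inl ⟨h, ?_⟩⟩
          have hb' : w⁻¹ (2 * J + 2) = 2 * K + 2 := by omega
          rw [← hb']; exact w.apply_symm_apply _
        · have hb' : w⁻¹ (2 * J + 2) = 2 * K := by omega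
          have hKpos : 1 ≤ K := by
            have := hmem' (2 * J + 2) (by omega); omega
          obtain ⟨J', hJ'm, hJ'⟩ := IH (K - 1) (by omega) (by omega)
          have e2 : 2 * (K - 1) + 2 = 2 * K := by omega
          have hw2K : w (2 * K) = 2 * J + 2 := by rw [← hb']; exact w.apply_symm_apply _
          rw [e2] at hJ'
          rcases hJ' with ⟨hA, hB⟩ | ⟨hA, hB⟩
          · exfalso
            have hJJ : 2 * J' + 2 = 2 * J + 2 := by rw [← hB, hw2K]
            have hvv : w (2 * (K - 1) + 1) = w (2 * K + 1) := by
              rw [hA, h]; omega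
            have := w.injective hvv
            omega
          · exfalso
            rw [hw2K] at hB
            omega
      · have hb : w⁻¹ (2 * J + 2) = 2 * K + 1 := by rw [← h]; exact w.symm_apply_apply _
        rcases hadj J hJm with ha | ha
        · have ha' : w⁻¹ (2 * J + 1) = 2 * K := by omega
          have hKpos : 1 ≤ K := by
            have := hmem' (2 * J + 1) (by omega); omega
          obtain ⟨J', hJ'm, hJ'⟩ := IH (K - 1) (by omega) (by omega)
          have e2 : 2 * (K - 1) + 2 = 2 * K := by omega
          have hw2K : w (2 * K) = 2 * J + 1 := by rw [← ha']; exact w.apply_symm_apply _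
          rw [e2] at hJ'
          rcases hJ' with ⟨hA, hB⟩ | ⟨hA, hB⟩
          · exfalso
            rw [hw2K] at hB
            omega
          · exfalso
            have hJJ : 2 * J' + 1 = 2 * J + 1 := by rw [← hB, hw2K]
            have hvv : w (2 * (K - 1) + 1) = w (2 * K + 1) := by
              rw [hA, h]; omega
            have := w.injective hvv
            omega
        · refine ⟨J, hJm, Or.inr ⟨h, ?_⟩⟩
          have ha' : w⁻¹ (2 * J + 1) = 2 * K + 2 := by omega
          rw [← ha']; exact w.apply_symm_apply _
  have main' : ∀ k : Fin m, ∃ j : Fin m,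
      (w (2 * (k : ℕ) + 1) = 2 * (j : ℕ) + 1 ∧ w (2 * (k : ℕ) + 2) = 2 * (j : ℕ) + 2) ∨
      (w (2 * (k : ℕ) + 1) = 2 * (j : ℕ) + 2 ∧ w (2 * (k : ℕ) + 2) = 2 * (j : ℕ) + 1) := by
    intro k
    obtain ⟨J, hJ, h⟩ := main (k : ℕ) k.isLt
    exact ⟨⟨J, hJ⟩, h⟩
  choose t ht using main'
  have tinj : Function.Injective t := by
    intro k₁ k₂ hEq
    have h1 := ht k₁
    have h2 := ht k₂
    rw [hEq] at h1
    rcases h1 with ⟨a1, b1⟩ | ⟨a1, b1⟩ <;> rcases h2 with ⟨a2, b2⟩ | ⟨a2, b2⟩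
    · exact Fin.ext (by have := w.injective (a1.trans a2.symm); omega)
    · exact Fin.ext (by have := w.injective (a1.trans b2.symm); omega)
    · exact Fin.ext (by have := w.injective (a1.trans b2.symm); omega)
    · exact Fin.ext (by have := w.injective (a1.trans a2.symm); omega)
  let τ : Equiv.Perm (Fin m) := Equiv.ofBijective t (Finite.injective_iff_bijective.mp tinj)
  have hτ : ∀ k, τ k = t k := fun k => rfl
  refine ⟨fun j => if w (2 * ((τ.symm j : Fin m) : ℕ) + 1) = 2 * (j : ℕ) + 1 then 0 else 1,
    τ, ?_⟩
  ext i
  rw [wEquiv_apply]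
  by_cases hi : 1 ≤ i ∧ i ≤ 2 * m
  · obtain ⟨K, r, hK, hr, rfl⟩ := exists_decomp m i hi
    simp only [wFun_apply m _ τ K r hK hr, Equiv.symm_apply_apply]
    rw [hτ ⟨K, hK⟩]
    have htK : (w (2 * K + 1) = 2 * (t ⟨K, hK⟩ : ℕ) + 1 ∧ w (2 * K + 2) = 2 * (t ⟨K, hK⟩ : ℕ) + 2) ∨
        (w (2 * K + 1) = 2 * (t ⟨K, hK⟩ : ℕ) + 2 ∧ w (2 * K + 2) = 2 * (t ⟨K, hK⟩ : ℕ) + 1) :=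
      ht ⟨K, hK⟩
    rcases htK with ⟨hA, hB⟩ | ⟨hA, hB⟩
    · rw [if_pos hA]
      interval_cases r
      · have hv : ((((0 : ℕ) : ZMod 2)) + (0 : ZMod 2)).val = 0 := by decide
        rw [hv, show 2 * K + 1 + 0 = 2 * K + 1 from rfl]
        omega
      · have hv : ((((1 : ℕ) : ZMod 2)) + (0 : ZMod 2)).val = 1 := by decide
        rw [hv, show 2 * K + 1 + 1 = 2 * K + 2 from rfl]
        omega
    · rw [if_neg (by omega)]
      interval_cases r
      · have hv : ((((0 : ℕ) : ZMod 2)) + (1 : ZMod 2)).val = 1 := by decide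
        rw [hv, show 2 * K + 1 + 0 = 2 * K + 1 from rfl]
        omega
      · have hv : ((((1 : ℕ) : ZMod 2)) + (1 : ZMod 2)).val = 0 := by decide
        rw [hv, show 2 * K + 1 + 1 = 2 * K + 2 from rfl]
        omega
  · rw [wFun_out m _ _ i hi, hfix i hi]

lemma wachs_mem_range (m : ℕ) (w : Equiv.Perm ℕ) (hw : IsWachs (2 * m) w) :
    w ∈ (Phi m).range := by
  obtain ⟨ε, τ, hwe⟩ := wachs_exists_pre m w hw
  refine ⟨⟨fun x => Multiplicative.ofAdd (ε x), τ⟩, ?_⟩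
  rw [← hwe]
  show wEquiv m (fun x => Multiplicative.toAdd (Multiplicative.ofAdd (ε x))) τ = wEquiv m ε τ
  rfl

end Aux

/-- For every `m ≥ 1`, the set `W(S_{2m})` of Wachs permutations of
`S_{2m}` is a subgroup, isomorphic to the semidirect product
`(ℤ/2ℤ)^m ⋊ S_m` (with `S_m` permuting coordinates), i.e. to `S_2 ≀ S_m = B_m`. -/

theorem wachs_subgroup_iso_semidirect (m : ℕ) (hm : 1 ≤ m) :
    ∃ H : Subgroup (Equiv.Perm ℕ),
      ((H : Set (Equiv.Perm ℕ)) = {w | IsWachs (2*m) w}) ∧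
      Nonempty
        (H ≃* SemidirectProduct (Fin m → Multiplicative (ZMod 2))
          (Equiv.Perm (Fin m)) (coordPerm m)) := by
  refine ⟨(Phi m).range, ?_, ?_⟩
  · ext w
    simp only [SetLike.mem_coe, Set.mem_setOf_eq]
    constructor
    · rintro ⟨p, rfl⟩
      exact wEquiv_isWachs m _ _
    · intro hw
      exact wachs_mem_range m w hw
  · exact ⟨(MonoidHom.ofInjective (Phi_injective m)).symm⟩

end WachsPaper
end

section
/- Let m ≥ 1, v ∈ W(S_{2m}) with φ_{2m}(v) = (τ,T), and let 1 ≤ i < j ≤ m with i ∉ T, j ∉ T and τ(i,j) ⋖ τ in the Bruhat order of S_m (where τ(i,j) denotes τ multiplied on the right by the transposition of i and j). Let w^A_{i,j}(v) denote the Wachs permutation with φ_{2m}(w^A_{i,j}(v)) = (τ(i,j), T ∪ {i,j}). Then w^A_{i,j}(v) < v in the Bruhat order of S_{2m} and ℓ_W(v) − ℓ_W(w^A_{i,j}(v)) = 1. Moreover, if u ∈ W(S_{2m}) with φ_{2m}(u) = (σ,S), u < v, and σ ≤ τ(i,j), then u ≤ w^A_{i,j}(v). -/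
open Finset
open scoped Classical

namespace WachsPaper

/-! ### Auxiliary counting machinery -/

/-- count of positions `p ∈ [1,k]` with `w p ≥ t`. -/
def Dcnt (w : ℕ → ℕ) (k t : ℕ) : ℕ :=
  ((Finset.Icc 1 k).filter fun p => t ≤ w p).card

lemma Dcnt_zero (w : ℕ → ℕ) (t : ℕ) : Dcnt w 0 t = 0 := by
  simp [Dcnt]

lemma Dcnt_succ (w : ℕ → ℕ) (k t : ℕ) :
    Dcnt w (k+1) t = Dcnt w k t + (if t ≤ w (k+1) then 1 else 0) := by
  unfold Dcnt
  have h : Finset.Icc 1 (k+1) = insert (k+1) (Finset.Icc 1 k) := by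
    ext x; simp only [Finset.mem_Icc, Finset.mem_insert]; omega
  have hnot : (k+1) ∉ (Finset.Icc 1 k).filter fun p => t ≤ w p := by
    simp only [Finset.mem_filter, Finset.mem_Icc]; omega
  rw [h, Finset.filter_insert]
  split_ifs with h1
  · rw [Finset.card_insert_of_notMem hnot]
  · omega

lemma Dcnt_congr {w1 w2 : ℕ → ℕ} {k : ℕ} (h : ∀ p ∈ Finset.Icc 1 k, w1 p = w2 p) (t : ℕ) :
    Dcnt w1 k t = Dcnt w2 k t := by
  unfold Dcnt
  congr 1
  apply Finset.filter_congr
  intro p hp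
  simp [h p hp]

lemma Dcnt_le_of_pointwise {w1 w2 : ℕ → ℕ} {k : ℕ}
    (h : ∀ p ∈ Finset.Icc 1 k, w1 p ≤ w2 p) (t : ℕ) :
    Dcnt w1 k t ≤ Dcnt w2 k t := by
  unfold Dcnt
  apply Finset.card_le_card
  intro p hp
  simp only [Finset.mem_filter] at *
  exact ⟨hp.1, le_trans hp.2 (h p hp.1)⟩

lemma Dcnt_swap (w : ℕ → ℕ) (k t i j : ℕ) (hi : i ∈ Finset.Icc 1 k) (hj : j ∈ Finset.Icc 1 k) :
    Dcnt (fun p => w (Equiv.swap i j p)) k t = Dcnt w k t := by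
  unfold Dcnt
  have hmem : ∀ p ∈ Finset.Icc 1 k, Equiv.swap i j p ∈ Finset.Icc 1 k := by
    intro p hp
    rcases eq_or_ne p i with rfl | hpi
    · rw [Equiv.swap_apply_left]; exact hj
    rcases eq_or_ne p j with rfl | hpj
    · rw [Equiv.swap_apply_right]; exact hi
    · rw [Equiv.swap_apply_of_ne_of_ne hpi hpj]; exact hp
  apply Finset.card_bij' (fun p _ => Equiv.swap i j p) (fun p _ => Equiv.swap i j p)
  · intro p hp
    simp only [Finset.mem_filter] at *
    exact ⟨hmem p hp.1, hp.2⟩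
  · intro p hp
    simp only [Finset.mem_filter] at *
    refine ⟨hmem p hp.1, ?_⟩
    rw [Equiv.swap_apply_self]
    exact hp.2
  · intro p _; exact Equiv.swap_apply_self _ _ _
  · intro p _; exact Equiv.swap_apply_self _ _ _

lemma Dcnt_anti (w : ℕ → ℕ) (k : ℕ) {t t' : ℕ} (h : t ≤ t') :
    Dcnt w k t' ≤ Dcnt w k t := by
  unfold Dcnt
  apply Finset.card_le_card
  intro p hp
  simp only [Finset.mem_filter] at *
  exact ⟨hp.1, le_trans h hp.2⟩

lemma Dcnt_no_val {w : ℕ → ℕ} {k t : ℕ} (h : ∀ p ∈ Finset.Icc 1 k, w p ≠ t) :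
    Dcnt w k t = Dcnt w k (t+1) := by
  unfold Dcnt
  congr 1
  apply Finset.filter_congr
  intro p hp
  have := h p hp
  omega

lemma Dcnt_diff_one {w1 w2 : ℕ → ℕ} {k i : ℕ} (hi : i ∈ Finset.Icc 1 k)
    (h : ∀ p ∈ Finset.Icc 1 k, p ≠ i → w1 p = w2 p) (t : ℕ) :
    Dcnt w1 k t + (if t ≤ w2 i then 1 else 0) = Dcnt w2 k t + (if t ≤ w1 i then 1 else 0) := by
  have key : ∀ w : ℕ → ℕ, Dcnt w k t =
      (((Finset.Icc 1 k).erase i).filter fun p => t ≤ w p).card + (if t ≤ w i then 1 else 0) := by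
    intro w
    unfold Dcnt
    conv_lhs => rw [← Finset.insert_erase hi]
    rw [Finset.filter_insert]
    have hnot : i ∉ ((Finset.Icc 1 k).erase i).filter fun p => t ≤ w p := by
      simp
    split_ifs with h1
    · rw [Finset.card_insert_of_notMem hnot]
    · omega
  rw [key w1, key w2]
  have heq : (((Finset.Icc 1 k).erase i).filter fun p => t ≤ w1 p).card =
      (((Finset.Icc 1 k).erase i).filter fun p => t ≤ w2 p).card := by
    congr 1
    apply Finset.filter_congr
    intro p hp
    rw [h p (Finset.mem_of_mem_erase hp) (Finset.ne_of_mem_erase hp)]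
  omega

lemma Dcnt_split (w : ℕ → ℕ) {k1 k2 : ℕ} (h : k1 ≤ k2) (t : ℕ) :
    Dcnt w k2 t = Dcnt w k1 t + ((Finset.Icc (k1+1) k2).filter fun p => t ≤ w p).card := by
  unfold Dcnt
  rw [← Finset.card_union_of_disjoint, ← Finset.filter_union]
  · congr 2
    ext x
    simp only [Finset.mem_Icc, Finset.mem_union]
    omega
  · apply Finset.disjoint_filter_filter
    rw [Finset.disjoint_left]
    intro x hx hx'
    simp only [Finset.mem_Icc] at *
    omega

/-! ### sorted lists vs counts -/

lemma list_getD_ge_iff (t : ℕ) (ht : 1 ≤ t) :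
    ∀ (l : List ℕ), l.Pairwise (· ≤ ·) → ∀ idx : ℕ,
      (t ≤ l.getD idx 0 ↔
        l.length ≤ idx + l.countP (fun x => decide (t ≤ x)) ∧ idx < l.length) := by
  intro l
  induction l with
  | nil => intro _ idx; simp; omega
  | cons x xs ih =>
    intro hs idx
    rw [List.pairwise_cons] at hs
    have hxs := ih hs.2
    have hcle : xs.countP (fun x => decide (t ≤ x)) ≤ xs.length := List.countP_le_length
    cases idx with
    | zero =>
      simp only [List.getD_cons_zero, List.length_cons, List.countP_cons]
      by_cases hx : t ≤ x
      · have hc : xs.countP (fun x => decide (t ≤ x)) = xs.length :=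
          List.countP_eq_length.mpr fun y hy => decide_eq_true (le_trans hx (hs.1 y hy))
        have hd : (decide (t ≤ x)) = true := by simpa using hx
        simp [hd, hc, hx]
        all_goals omega
      · have hd : (decide (t ≤ x)) = false := by simpa using hx
        simp [hd, hx]
        all_goals omega
    | succ n =>
      simp only [List.getD_cons_succ, List.length_cons, List.countP_cons]
      rw [hxs n]
      by_cases hx : t ≤ x
      · have hc : xs.countP (fun x => decide (t ≤ x)) = xs.length :=
          List.countP_eq_length.mpr fun y hy => decide_eq_true (le_trans hx (hs.1 y hy))
        have hd : (decide (t ≤ x)) = true := by simpa using hx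
        simp [hd, hc]
        all_goals omega
      · have hd : (decide (t ≤ x)) = false := by simpa using hx
        simp [hd]
        all_goals omega

lemma sorted_dom_iff {l1 l2 : List ℕ} (h1 : l1.Pairwise (· ≤ ·)) (h2 : l2.Pairwise (· ≤ ·))
    (hlen : l1.length = l2.length) :
    (∀ idx : ℕ, l1.getD idx 0 ≤ l2.getD idx 0) ↔
      (∀ t : ℕ, 1 ≤ t →
        l1.countP (fun x => decide (t ≤ x)) ≤ l2.countP (fun x => decide (t ≤ x))) := by
  constructor
  · intro h t ht
    by_contra hcon
    push_neg at hcon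
    have hc1len : l1.countP (fun x => decide (t ≤ x)) ≤ l1.length := List.countP_le_length
    have key1 := (list_getD_ge_iff t ht l1 h1
      (l1.length - l1.countP (fun x => decide (t ≤ x)))).mpr ⟨by omega, by omega⟩
    have key2 := (list_getD_ge_iff t ht l2 h2
      (l1.length - l1.countP (fun x => decide (t ≤ x)))).mp (le_trans key1 (h _))
    omega
  · intro h idx
    by_cases hl : idx < l1.length
    · by_cases h0 : 1 ≤ l1.getD idx 0
      · have key1 := (list_getD_ge_iff _ h0 l1 h1 idx).mp le_rfl
        have hle := h _ h0
        exact (list_getD_ge_iff _ h0 l2 h2 idx).mpr ⟨by omega, by omega⟩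
      · omega
    · rw [List.getD_eq_default, List.getD_eq_default] <;> omega

lemma countP_sort_eq (s : Finset ℕ) (t : ℕ) :
    (s.sort (· ≤ ·)).countP (fun x => decide (t ≤ x)) = (s.filter (fun x => t ≤ x)).card := by
  have h1 : (s.sort (· ≤ ·)).countP (fun x => decide (t ≤ x)) =
      s.toList.countP (fun x => decide (t ≤ x)) :=
    (Finset.sort_perm_toList s (· ≤ ·)).countP_eq _
  have h2 : (s.filter (fun x => t ≤ x)).card = Multiset.countP (fun x => t ≤ x) s.val := by
    rw [Multiset.countP_eq_card_filter]; rfl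
  rw [h1, h2, ← Finset.coe_toList s, Multiset.coe_countP]

lemma length_sortedPrefix (w : Equiv.Perm ℕ) (k : ℕ) : (sortedPrefix ⇑w k).length = k := by
  rw [sortedPrefix, Finset.length_sort, Finset.card_image_of_injective _ w.injective,
    Nat.card_Icc]
  omega

lemma countP_sortedPrefix (w : Equiv.Perm ℕ) (k t : ℕ) :
    (sortedPrefix ⇑w k).countP (fun x => decide (t ≤ x)) = Dcnt ⇑w k t := by
  rw [sortedPrefix, countP_sort_eq]
  rw [Finset.filter_image]
  rw [Finset.card_image_of_injective _ w.injective]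
  rfl

lemma sortedPrefix_sorted (w : Equiv.Perm ℕ) (k : ℕ) :
    (sortedPrefix ⇑w k).Pairwise (· ≤ ·) := Finset.pairwise_sort _ _

lemma bruhatLE_iff_counts (n : ℕ) (u v : Equiv.Perm ℕ) :
    bruhatLE n u v ↔
      ∀ k ∈ Finset.Icc 1 n, ∀ t : ℕ, 1 ≤ t → Dcnt ⇑u k t ≤ Dcnt ⇑v k t := by
  unfold bruhatLE
  constructor
  · intro h k hk t ht
    rw [← countP_sortedPrefix u k t, ← countP_sortedPrefix v k t]
    exact (sorted_dom_iff (sortedPrefix_sorted u k) (sortedPrefix_sorted v k)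
      (by rw [length_sortedPrefix, length_sortedPrefix])).mp (h k hk) t ht
  · intro h k hk
    apply (sorted_dom_iff (sortedPrefix_sorted u k) (sortedPrefix_sorted v k)
      (by rw [length_sortedPrefix, length_sortedPrefix])).mpr
    intro t ht
    rw [countP_sortedPrefix, countP_sortedPrefix]
    exact h k hk t ht

/-! ### PermOn and phiRel machinery -/

lemma permOn_mem {n : ℕ} {w : Equiv.Perm ℕ} (h : PermOn n w) {x : ℕ}
    (hx : x ∈ Finset.Icc 1 n) : w x ∈ Finset.Icc 1 n := by
  by_contra hw
  have h1 := h (w x) hw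
  have h2 : w x = x := w.injective h1
  rw [h2] at hw
  exact hw hx

lemma permOn_bounds {n : ℕ} {w : Equiv.Perm ℕ} (h : PermOn n w) {x : ℕ}
    (hx : x ∈ Finset.Icc 1 n) : 1 ≤ w x ∧ w x ≤ n := by
  have := permOn_mem h hx
  simpa [Finset.mem_Icc] using this

lemma permOn_mul_swap {n : ℕ} {τ : Equiv.Perm ℕ} (h : PermOn n τ) {i j : ℕ}
    (hi : i ∈ Finset.Icc 1 n) (hj : j ∈ Finset.Icc 1 n) :
    PermOn n (τ * Equiv.swap i j) := by
  intro x hx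
  have hxi : x ≠ i := by rintro rfl; exact hx hi
  have hxj : x ≠ j := by rintro rfl; exact hx hj
  rw [Equiv.Perm.mul_apply, Equiv.swap_apply_of_ne_of_ne hxi hxj, h x hx]

lemma phiRel_mem {m : ℕ} {σ u : Equiv.Perm ℕ} {S : Finset ℕ}
    (h : phiRel m σ S u) {κ : ℕ} (hκ : κ ∈ Finset.Icc 1 m) (hκS : κ ∈ S) :
    u (2*κ - 1) = 2 * σ κ ∧ u (2*κ) = 2 * σ κ - 1 := by
  have := h κ hκ; rwa [if_pos hκS] at this

lemma phiRel_not_mem {m : ℕ} {σ u : Equiv.Perm ℕ} {S : Finset ℕ}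
    (h : phiRel m σ S u) {κ : ℕ} (hκ : κ ∈ Finset.Icc 1 m) (hκS : κ ∉ S) :
    u (2*κ - 1) = 2 * σ κ - 1 ∧ u (2*κ) = 2 * σ κ := by
  have := h κ hκ; rwa [if_neg hκS] at this

lemma P1a {m : ℕ} {σ u : Equiv.Perm ℕ} {S : Finset ℕ}
    (hφ : phiRel m σ S u) (hσ : PermOn m σ) :
    ∀ κ, κ ≤ m → ∀ t, Dcnt ⇑u (2*κ) t = Dcnt ⇑σ κ ((t+1)/2) + Dcnt ⇑σ κ ((t+2)/2) := by
  intro κ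
  induction κ with
  | zero => intro _ t; simp [Dcnt_zero]
  | succ κ ih =>
    intro hκ t
    have hκ' : κ ≤ m := by omega
    have hmem : κ + 1 ∈ Finset.Icc 1 m := by simp only [Finset.mem_Icc]; omega
    have hσ1 : 1 ≤ σ (κ+1) := (permOn_bounds hσ hmem).1
    have hval : (u (2*κ + 1) = 2 * σ (κ+1) - 1 ∧ u (2*κ + 2) = 2 * σ (κ+1)) ∨
        (u (2*κ + 1) = 2 * σ (κ+1) ∧ u (2*κ + 2) = 2 * σ (κ+1) - 1) := by
      have e1 : 2*(κ+1) - 1 = 2*κ + 1 := by omega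
      have e2 : 2*(κ+1) = 2*κ + 2 := by omega
      by_cases hS : κ+1 ∈ S
      · have := phiRel_mem hφ hmem hS
        rw [e1, e2] at this
        right; exact this
      · have := phiRel_not_mem hφ hmem hS
        rw [e1, e2] at this
        left; exact this
    have e3 : 2*(κ+1) = (2*κ + 1) + 1 := by omega
    rw [e3, Dcnt_succ, Dcnt_succ, ih hκ' t, Dcnt_succ ⇑σ κ, Dcnt_succ ⇑σ κ]
    have e4 : 2*κ + 1 + 1 = 2*κ + 2 := by omega
    rw [e4]
    rcases hval with ⟨ha, hb⟩ | ⟨ha, hb⟩ <;> rw [ha, hb] <;> (split_ifs <;> omega)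

lemma P1b {m : ℕ} {σ u : Equiv.Perm ℕ} {S : Finset ℕ}
    (hφ : phiRel m σ S u) (hσ : PermOn m σ) {κ : ℕ} (hκ1 : 1 ≤ κ) (hκ : κ ≤ m) (t : ℕ) :
    Dcnt ⇑u (2*κ - 1) t + (if t ≤ u (2*κ) then 1 else 0)
      = Dcnt ⇑σ κ ((t+1)/2) + Dcnt ⇑σ κ ((t+2)/2) := by
  have hP := P1a hφ hσ κ hκ t
  have h2 : Dcnt ⇑u (2*κ) t = Dcnt ⇑u (2*κ-1) t + (if t ≤ u (2*κ) then 1 else 0) := by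
    have e : 2*κ = (2*κ - 1) + 1 := by omega
    conv_lhs => rw [e]
    rw [Dcnt_succ, ← e]
  rw [h2] at hP
  exact hP

/-! ### length machinery -/

lemma len_eq_sum (n : ℕ) (w : ℕ → ℕ) :
    len n w = ∑ q ∈ Finset.Icc 1 n, Dcnt w (q-1) (w q + 1) := by
  unfold len
  rw [Finset.card_eq_sum_card_fiberwise (f := Prod.snd) (t := Finset.Icc 1 n)
    (fun x hx => by
      simp only [Finset.mem_coe, Finset.mem_filter, Finset.mem_product] at hx
      exact hx.1.2)]
  apply Finset.sum_congr rfl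
  intro q hq
  simp only [Finset.mem_Icc] at hq
  unfold Dcnt
  refine Finset.card_bij' (fun p _ => p.1) (fun p _ => (p, q)) ?hi ?hj ?li ?ri
  case hi =>
    intro p hp
    simp only [Finset.mem_filter, Finset.mem_product, Finset.mem_Icc] at hp ⊢
    obtain ⟨⟨⟨hp1, hp2⟩, hlt, hw⟩, hq2⟩ := hp
    subst hq2
    exact ⟨⟨hp1.1, by omega⟩, by omega⟩
  case hj =>
    intro p hp
    simp only [Finset.mem_filter, Finset.mem_Icc] at hp
    simp only [Finset.mem_filter, Finset.mem_product, Finset.mem_Icc]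
    exact ⟨⟨⟨⟨hp.1.1, by omega⟩, by omega, by omega⟩, by omega, by omega⟩, trivial⟩
  case li =>
    rintro ⟨p1, p2⟩ hp
    simp only [Finset.mem_filter] at hp
    have h2 : p2 = q := hp.2
    subst h2
    rfl
  case ri =>
    intro p _
    rfl

lemma sum_Icc_succ (f : ℕ → ℕ) (k : ℕ) :
    ∑ q ∈ Finset.Icc 1 (k+1), f q = ∑ q ∈ Finset.Icc 1 k, f q + f (k+1) := by
  rw [← Finset.insert_Icc_right_eq_Icc_add_one (by omega : 1 ≤ k+1),
    Finset.sum_insert (by simp only [Finset.mem_Icc]; omega)]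
  omega

lemma sum_Icc_two_mul (m : ℕ) (F : ℕ → ℕ) :
    ∑ q ∈ Finset.Icc 1 (2*m), F q = ∑ κ ∈ Finset.Icc 1 m, (F (2*κ - 1) + F (2*κ)) := by
  induction m with
  | zero => simp
  | succ m ih =>
    have e : 2*(m+1) = (2*m + 1) + 1 := by omega
    rw [e, sum_Icc_succ, sum_Icc_succ, ih, sum_Icc_succ (fun κ => F (2*κ - 1) + F (2*κ)) m]
    have e1 : 2*(m+1) - 1 = 2*m + 1 := by omega
    have e2 : 2*(m+1) = 2*m + 1 + 1 := by omega
    simp only [e1, e2, Nat.add_sub_cancel]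
    omega

lemma len_phiRel {m : ℕ} {τ v : Equiv.Perm ℕ} {T : Finset ℕ}
    (hφ : phiRel m τ T v) (hτ : PermOn m τ) :
    len (2*m) ⇑v = 4 * len m ⇑τ + ((Finset.Icc 1 m).filter (· ∈ T)).card := by
  rw [len_eq_sum, len_eq_sum m ⇑τ, sum_Icc_two_mul, Finset.mul_sum,
    Finset.card_filter, ← Finset.sum_add_distrib]
  apply Finset.sum_congr rfl
  intro κ hκ
  have hκ' := hκ
  simp only [Finset.mem_Icc] at hκ'
  obtain ⟨hκ1, hκm⟩ := hκ'
  have hc1 : 1 ≤ τ κ := (permOn_bounds hτ hκ).1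
  have hinj : ∀ p ∈ Finset.Icc 1 (κ-1), τ p ≠ τ κ := by
    intro p hp he
    simp only [Finset.mem_Icc] at hp
    have := τ.injective he
    omega
  have hnov : Dcnt ⇑τ (κ-1) (τ κ) = Dcnt ⇑τ (κ-1) (τ κ + 1) := Dcnt_no_val hinj
  have hsucc : ∀ s, Dcnt ⇑τ κ s = Dcnt ⇑τ (κ-1) s + (if s ≤ τ κ then 1 else 0) := by
    intro s
    have e : κ = (κ - 1) + 1 := by omega
    conv_lhs => rw [e]
    rw [Dcnt_succ, ← e]
  have e0 : 2*κ - 1 - 1 = 2*(κ-1) := by omega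
  have hP1 := P1a hφ hτ (κ-1) (by omega)
  have hP2 := P1b hφ hτ hκ1 hκm (v (2*κ) + 1)
  rw [if_neg (by omega : ¬ (v (2*κ) + 1 ≤ v (2*κ)))] at hP2
  rw [e0, hP1 (v (2*κ - 1) + 1)]
  by_cases hκT : κ ∈ T
  · obtain ⟨hv1, hv2⟩ := phiRel_mem hφ hκ hκT
    rw [if_pos hκT]
    have d1 : (v (2*κ - 1) + 1 + 1)/2 = τ κ + 1 := by omega
    have d2 : (v (2*κ - 1) + 1 + 2)/2 = τ κ + 1 := by omega
    have d3 : (v (2*κ) + 1 + 1)/2 = τ κ := by omega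
    have d4 : (v (2*κ) + 1 + 2)/2 = τ κ + 1 := by omega
    rw [d1, d2] at *
    rw [d3, d4] at hP2
    rw [hsucc (τ κ), hsucc (τ κ + 1), if_pos (le_refl (τ κ)),
      if_neg (by omega : ¬ (τ κ + 1 ≤ τ κ))] at hP2
    omega
  · obtain ⟨hv1, hv2⟩ := phiRel_not_mem hφ hκ hκT
    rw [if_neg hκT]
    have d1 : (v (2*κ - 1) + 1 + 1)/2 = τ κ := by omega
    have d2 : (v (2*κ - 1) + 1 + 2)/2 = τ κ + 1 := by omega
    have d3 : (v (2*κ) + 1 + 1)/2 = τ κ + 1 := by omega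
    have d4 : (v (2*κ) + 1 + 2)/2 = τ κ + 1 := by omega
    rw [d1, d2]
    rw [d3, d4] at hP2
    rw [hsucc (τ κ + 1), if_neg (by omega : ¬ (τ κ + 1 ≤ τ κ))] at hP2
    omega

lemma len_tau_cover {m : ℕ} {τ : Equiv.Perm ℕ} (hτ : PermOn m τ) {i j : ℕ}
    (hi : 1 ≤ i) (hij : i < j) (hj : j ≤ m)
    (hba : τ j < τ i)
    (hmid : ∀ κ, i < κ → κ < j → τ κ < τ j ∨ τ i < τ κ) :
    len m ⇑τ = len m ⇑(τ * Equiv.swap i j) + 1 := by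
  have hiS : i ∈ Finset.Icc 1 m := by simp only [Finset.mem_Icc]; omega
  have hjS : j ∈ Finset.Icc 1 m := by simp only [Finset.mem_Icc]; omega
  have hτ'i : (τ * Equiv.swap i j) i = τ j := by
    rw [Equiv.Perm.mul_apply, Equiv.swap_apply_left]
  have hτ'j : (τ * Equiv.swap i j) j = τ i := by
    rw [Equiv.Perm.mul_apply, Equiv.swap_apply_right]
  have hτ'q : ∀ q, q ≠ i → q ≠ j → (τ * Equiv.swap i j) q = τ q := by
    intro q h1 h2; rw [Equiv.Perm.mul_apply, Equiv.swap_apply_of_ne_of_ne h1 h2]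
  rw [len_eq_sum, len_eq_sum]
  set f : ℕ → ℕ := fun q => Dcnt ⇑τ (q-1) (τ q + 1) with hf
  set g : ℕ → ℕ := fun q => Dcnt ⇑(τ * Equiv.swap i j) (q-1) ((τ * Equiv.swap i j) q + 1)
    with hg
  have hjmem : j ∈ (Finset.Icc 1 m).erase i := Finset.mem_erase.mpr ⟨by omega, hjS⟩
  rw [← Finset.add_sum_erase _ f hiS, ← Finset.add_sum_erase _ f hjmem,
      ← Finset.add_sum_erase _ g hiS, ← Finset.add_sum_erase _ g hjmem]
  have hrest : ∑ q ∈ ((Finset.Icc 1 m).erase i).erase j, f q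
      = ∑ q ∈ ((Finset.Icc 1 m).erase i).erase j, g q := by
    apply Finset.sum_congr rfl
    intro q hq
    have hqj : q ≠ j := Finset.ne_of_mem_erase hq
    have hqi : q ≠ i := Finset.ne_of_mem_erase (Finset.mem_of_mem_erase hq)
    have hqm := Finset.mem_of_mem_erase (Finset.mem_of_mem_erase hq)
    simp only [Finset.mem_Icc] at hqm
    have hvq : (τ * Equiv.swap i j) q = τ q := hτ'q q hqi hqj
    simp only [hf, hg, hvq]
    rcases lt_trichotomy q i with hlt | heq | hgt
    · apply Dcnt_congr
      intro p hp
      simp only [Finset.mem_Icc] at hp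
      exact (hτ'q p (by omega) (by omega)).symm
    · exact absurd heq hqi
    · rcases lt_trichotomy q j with hlt2 | heq2 | hgt2
      · have hd := Dcnt_diff_one (w1 := ⇑(τ * Equiv.swap i j)) (w2 := ⇑τ) (k := q-1) (i := i)
          (by simp only [Finset.mem_Icc]; omega)
          (by intro p hp hpi
              simp only [Finset.mem_Icc] at hp
              exact hτ'q p hpi (by omega)) (τ q + 1)
        rw [hτ'i] at hd
        rcases hmid q hgt hlt2 with hc | hc
        · rw [if_pos (by omega : τ q + 1 ≤ τ i), if_pos (by omega : τ q + 1 ≤ τ j)] at hd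
          omega
        · rw [if_neg (by omega : ¬ (τ q + 1 ≤ τ i)), if_neg (by omega : ¬ (τ q + 1 ≤ τ j))] at hd
          omega
      · exact absurd heq2 hqj
      · have hco : ⇑(τ * Equiv.swap i j) = fun p => τ (Equiv.swap i j p) := rfl
        rw [hco]
        exact (Dcnt_swap ⇑τ (q-1) (τ q + 1) i j (by simp only [Finset.mem_Icc]; omega)
          (by simp only [Finset.mem_Icc]; omega)).symm
  rw [hrest]
  have hgi : g i = Dcnt ⇑τ (i-1) (τ j + 1) := by
    simp only [hg, hτ'i]
    apply Dcnt_congr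
    intro p hp
    simp only [Finset.mem_Icc] at hp
    exact hτ'q p (by omega) (by omega)
  have hgj : g j = Dcnt ⇑τ (j-1) (τ i + 1) := by
    simp only [hg, hτ'j]
    have hd := Dcnt_diff_one (w1 := ⇑(τ * Equiv.swap i j)) (w2 := ⇑τ) (k := j-1) (i := i)
      (by simp only [Finset.mem_Icc]; omega)
      (by intro p hp hpi
          simp only [Finset.mem_Icc] at hp
          exact hτ'q p hpi (by omega)) (τ i + 1)
    rw [hτ'i, if_neg (by omega : ¬ (τ i + 1 ≤ τ i)),
      if_neg (by omega : ¬ (τ i + 1 ≤ τ j))] at hd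
    omega
  have hfi : f i = Dcnt ⇑τ (i-1) (τ i + 1) := rfl
  have hfj : f j = Dcnt ⇑τ (j-1) (τ j + 1) := rfl
  have hsplit : ∀ t, Dcnt ⇑τ (j-1) t
      = Dcnt ⇑τ (i-1) t + ((Finset.Icc i (j-1)).filter fun p => t ≤ τ p).card := by
    intro t
    have h := Dcnt_split ⇑τ (show i-1 ≤ j-1 by omega) t
    rwa [show i-1+1 = i by omega] at h
  have hM : ∀ t, ((Finset.Icc i (j-1)).filter fun p => t ≤ τ p).card
      = (if t ≤ τ i then 1 else 0) + ((Finset.Icc (i+1) (j-1)).filter fun p => t ≤ τ p).card := by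
    intro t
    rw [← Finset.insert_Icc_add_one_left_eq_Icc (show i ≤ j-1 by omega), Finset.filter_insert]
    split_ifs with h
    · rw [Finset.card_insert_of_notMem
        (by simp only [Finset.mem_filter, Finset.mem_Icc]; omega)]
      omega
    · omega
  have hMtail : ((Finset.Icc (i+1) (j-1)).filter fun p => τ j + 1 ≤ τ p).card
      = ((Finset.Icc (i+1) (j-1)).filter fun p => τ i + 1 ≤ τ p).card := by
    congr 1
    apply Finset.filter_congr
    intro p hp
    simp only [Finset.mem_Icc] at hp
    rcases hmid p (by omega) (by omega) with h | h <;> omega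
  have h1 := hsplit (τ j + 1)
  have h2 := hsplit (τ i + 1)
  rw [hM (τ j + 1), if_pos (by omega : τ j + 1 ≤ τ i)] at h1
  rw [hM (τ i + 1), if_neg (by omega : ¬ (τ i + 1 ≤ τ i))] at h2
  omega

set_option maxHeartbeats 4000000 in
/-- Lemma `lemma-tij`. If `v = (τ,T) ∈ W(S_{2m})`, `i,j ∉ T`,
`τ(i,j) ⋖ τ`, and `v' = w^A_{i,j}(v) = (τ·(i,j), T ∪ {i,j})`, then `v' < v`,
`ℓ_W(v) - ℓ_W(v') = 1`, and any `u = (σ,S) ∈ W(S_{2m})` with `u < v` and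
`σ ≤ τ·(i,j)` satisfies `u ≤ v'`. -/
theorem wA_coatom (m : ℕ) (hm : 1 ≤ m) (v v' τ : Equiv.Perm ℕ) (T : Finset ℕ)
    (i j : ℕ) (hv : IsWachs (2*m) v) (hτ : PermOn m τ) (hφv : phiRel m τ T v)
    (hi : 1 ≤ i) (hij : i < j) (hj : j ≤ m) (hiT : i ∉ T) (hjT : j ∉ T)
    (hcov : covInduced m (PermOn m) (τ * Equiv.swap i j) τ)
    (hv' : IsWachs (2*m) v')
    (hφv' : phiRel m (τ * Equiv.swap i j) (T ∪ {i, j}) v') :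
    bruhatLT (2*m) v' v ∧
    ((len (2*m) ⇑v : ℤ) - (len m ⇑τ : ℤ)) -
      ((len (2*m) ⇑v' : ℤ) - (len m ⇑(τ * Equiv.swap i j) : ℤ)) = 1 ∧
    (∀ u σ : Equiv.Perm ℕ, ∀ S : Finset ℕ,
      IsWachs (2*m) u → PermOn m σ → phiRel m σ S u →
      bruhatLT (2*m) u v → bruhatLE m σ (τ * Equiv.swap i j) →
      bruhatLE (2*m) u v') := by
  have hiS : i ∈ Finset.Icc 1 m := by simp only [Finset.mem_Icc]; omega
  have hjS : j ∈ Finset.Icc 1 m := by simp only [Finset.mem_Icc]; omega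
  have hτ' : PermOn m (τ * Equiv.swap i j) := permOn_mul_swap hτ hiS hjS
  have hτ'i : (τ * Equiv.swap i j) i = τ j := by
    rw [Equiv.Perm.mul_apply, Equiv.swap_apply_left]
  have hτ'j : (τ * Equiv.swap i j) j = τ i := by
    rw [Equiv.Perm.mul_apply, Equiv.swap_apply_right]
  have hτ'q : ∀ q, q ≠ i → q ≠ j → (τ * Equiv.swap i j) q = τ q := fun q h1 h2 => by
    rw [Equiv.Perm.mul_apply, Equiv.swap_apply_of_ne_of_ne h1 h2]
  have ha1 : 1 ≤ τ i := (permOn_bounds hτ hiS).1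
  have hb1 : 1 ≤ τ j := (permOn_bounds hτ hjS).1
  have hdiff : ∀ K, i ≤ K → K ≤ m → K < j → ∀ s,
      Dcnt ⇑(τ * Equiv.swap i j) K s + (if s ≤ τ i then 1 else 0)
        = Dcnt ⇑τ K s + (if s ≤ τ j then 1 else 0) := by
    intro K h1 h2 h3 s
    have hd := Dcnt_diff_one (w1 := ⇑(τ * Equiv.swap i j)) (w2 := ⇑τ) (k := K) (i := i)
      (by simp only [Finset.mem_Icc]; omega)
      (fun p hp hpi => by
        simp only [Finset.mem_Icc] at hp
        exact hτ'q p hpi (by omega)) s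
    rwa [hτ'i] at hd
  have hDττ' : ∀ K, K ≤ m → (K < i ∨ j ≤ K) → ∀ s,
      Dcnt ⇑(τ * Equiv.swap i j) K s = Dcnt ⇑τ K s := by
    intro K hKm hcase s
    rcases hcase with h | h
    · apply Dcnt_congr
      intro p hp
      simp only [Finset.mem_Icc] at hp
      exact hτ'q p (by omega) (by omega)
    · exact Dcnt_swap ⇑τ K s i j (by simp only [Finset.mem_Icc]; omega)
        (by simp only [Finset.mem_Icc]; omega)
  have hba : τ j < τ i := by
    have hne : τ i ≠ τ j := fun he => by
      have := τ.injective he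
      omega
    rcases lt_or_ge (τ j) (τ i) with h | h
    · exact h
    · exfalso
      have hcounts := (bruhatLE_iff_counts m (τ * Equiv.swap i j) τ).mp hcov.2.2.1.1
        i hiS (τ i + 1) (by omega)
      have hd := hdiff i le_rfl (by omega) hij (τ i + 1)
      rw [if_neg (by omega : ¬ (τ i + 1 ≤ τ i)),
        if_pos (by omega : τ i + 1 ≤ τ j)] at hd
      omega
  have hmid : ∀ κ, i < κ → κ < j → τ κ < τ j ∨ τ i < τ κ := by
    intro κ hκi hκj
    by_contra hcontra
    push_neg at hcontra
    obtain ⟨h1', h2'⟩ := hcontra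
    have hκm : κ ∈ Finset.Icc 1 m := by simp only [Finset.mem_Icc]; omega
    have hne1 : τ κ ≠ τ j := fun he => by have := τ.injective he; omega
    have hne2 : τ κ ≠ τ i := fun he => by have := τ.injective he; omega
    have hzi : (τ * Equiv.swap i κ) i = τ κ := by
      rw [Equiv.Perm.mul_apply, Equiv.swap_apply_left]
    have hzκ : (τ * Equiv.swap i κ) κ = τ i := by
      rw [Equiv.Perm.mul_apply, Equiv.swap_apply_right]
    have hzq : ∀ q, q ≠ i → q ≠ κ → (τ * Equiv.swap i κ) q = τ q := fun q h1 h2 => by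
      rw [Equiv.Perm.mul_apply, Equiv.swap_apply_of_ne_of_ne h1 h2]
    have hzP : PermOn m (τ * Equiv.swap i κ) := permOn_mul_swap hτ hiS hκm
    have hLE1 : bruhatLE m (τ * Equiv.swap i j) (τ * Equiv.swap i κ) := by
      apply (bruhatLE_iff_counts _ _ _).mpr
      intro K hK s hs
      simp only [Finset.mem_Icc] at hK
      rcases lt_or_ge K i with h | h
      · apply le_of_eq
        apply Dcnt_congr
        intro p hp
        simp only [Finset.mem_Icc] at hp
        rw [hτ'q p (by omega) (by omega), hzq p (by omega) (by omega)]
      rcases lt_or_ge K j with h2 | h2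
      · apply Dcnt_le_of_pointwise
        intro p hp
        simp only [Finset.mem_Icc] at hp
        by_cases hpi : p = i
        · rw [hpi, hτ'i, hzi]; omega
        by_cases hpκ : p = κ
        · rw [hpκ, hτ'q κ (by omega) (by omega), hzκ]; omega
        · rw [hτ'q p hpi (by omega), hzq p hpi hpκ]
      · apply le_of_eq
        have e1 : Dcnt ⇑(τ * Equiv.swap i j) K s = Dcnt ⇑τ K s :=
          Dcnt_swap ⇑τ K s i j (by simp only [Finset.mem_Icc]; omega)
            (by simp only [Finset.mem_Icc]; omega)
        have e2 : Dcnt ⇑(τ * Equiv.swap i κ) K s = Dcnt ⇑τ K s :=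
          Dcnt_swap ⇑τ K s i κ (by simp only [Finset.mem_Icc]; omega)
            (by simp only [Finset.mem_Icc]; omega)
        rw [e1, e2]
    have hNE1 : (τ * Equiv.swap i j) ≠ (τ * Equiv.swap i κ) := by
      intro he
      have h0 : (τ * Equiv.swap i j) i = (τ * Equiv.swap i κ) i := by rw [he]
      rw [hτ'i, hzi] at h0
      exact hne1 h0.symm
    have hLE2 : bruhatLE m (τ * Equiv.swap i κ) τ := by
      apply (bruhatLE_iff_counts _ _ _).mpr
      intro K hK s hs
      simp only [Finset.mem_Icc] at hK
      rcases lt_or_ge K i with h | h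
      · apply le_of_eq
        apply Dcnt_congr
        intro p hp
        simp only [Finset.mem_Icc] at hp
        rw [hzq p (by omega) (by omega)]
      rcases lt_or_ge K κ with h2 | h2
      · apply Dcnt_le_of_pointwise
        intro p hp
        simp only [Finset.mem_Icc] at hp
        by_cases hpi : p = i
        · rw [hpi, hzi]; omega
        · rw [hzq p hpi (by omega)]
      · apply le_of_eq
        exact Dcnt_swap ⇑τ K s i κ (by simp only [Finset.mem_Icc]; omega)
          (by simp only [Finset.mem_Icc]; omega)
    have hNE2 : (τ * Equiv.swap i κ) ≠ τ := by
      intro he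
      have h0 : (τ * Equiv.swap i κ) i = τ i := by rw [he]
      rw [hzi] at h0
      exact hne2 h0
    exact hcov.2.2.2 (τ * Equiv.swap i κ) hzP ⟨hLE1, hNE1⟩ ⟨hLE2, hNE2⟩
  -- block values
  obtain ⟨hvi1, hvi2⟩ := phiRel_not_mem hφv hiS hiT
  obtain ⟨hvj1, hvj2⟩ := phiRel_not_mem hφv hjS hjT
  have hiT' : i ∈ T ∪ {i, j} := by
    simp only [Finset.mem_union, Finset.mem_insert, Finset.mem_singleton]
    tauto
  have hjT' : j ∈ T ∪ {i, j} := by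
    simp only [Finset.mem_union, Finset.mem_insert, Finset.mem_singleton]
    tauto
  obtain ⟨hv'i1, hv'i2⟩ := phiRel_mem hφv' hiS hiT'
  obtain ⟨hv'j1, hv'j2⟩ := phiRel_mem hφv' hjS hjT'
  rw [hτ'i] at hv'i1 hv'i2
  rw [hτ'j] at hv'j1 hv'j2
  have hvv' : ∀ K, 1 ≤ K → K ≤ m → K ≠ i → K ≠ j → v' (2*K) = v (2*K) := by
    intro K h1 h2 hKi hKj
    have hKmem : K ∈ Finset.Icc 1 m := by simp only [Finset.mem_Icc]; omega
    have hτ'K : (τ * Equiv.swap i j) K = τ K := hτ'q K hKi hKj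
    by_cases hKT : K ∈ T
    · have e1 := (phiRel_mem hφv hKmem hKT).2
      have e2 := (phiRel_mem hφv' hKmem (by
        simp only [Finset.mem_union, Finset.mem_insert, Finset.mem_singleton]
        tauto)).2
      rw [e1, e2, hτ'K]
    · have e1 := (phiRel_not_mem hφv hKmem hKT).2
      have e2 := (phiRel_not_mem hφv' hKmem (by
        simp only [Finset.mem_union, Finset.mem_insert, Finset.mem_singleton]
        push_neg
        exact ⟨hKT, hKi, hKj⟩)).2
      rw [e1, e2, hτ'K]
  have hstep : ∀ (w : Equiv.Perm ℕ) (K : ℕ), 1 ≤ K → ∀ s,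
      Dcnt ⇑w K s = Dcnt ⇑w (K-1) s + (if s ≤ w K then 1 else 0) := by
    intro w K hK s
    have e : K = (K-1)+1 := by omega
    conv_lhs => rw [e]
    rw [Dcnt_succ, ← e]
  -- Goal 1 counts
  have hG1 : ∀ k ∈ Finset.Icc 1 (2*m), ∀ t, 1 ≤ t → Dcnt ⇑v' k t ≤ Dcnt ⇑v k t := by
    intro k hk t ht
    simp only [Finset.mem_Icc] at hk
    rcases Nat.even_or_odd k with ⟨c, hc⟩ | ⟨c, hc⟩
    · -- even
      obtain ⟨κ, hκdef, hκ1, hκm⟩ : ∃ κ, k = 2*κ ∧ 1 ≤ κ ∧ κ ≤ m := ⟨c, by omega⟩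
      subst hκdef
      rw [P1a hφv hτ κ hκm t, P1a hφv' hτ' κ hκm t]
      rcases lt_or_ge κ i with hcs | hcs
      · rw [hDττ' κ hκm (Or.inl hcs) ((t+1)/2), hDττ' κ hκm (Or.inl hcs) ((t+2)/2)]
      rcases lt_or_ge κ j with hcs2 | hcs2
      · have d1 := hdiff κ hcs hκm hcs2 ((t+1)/2)
        have d2 := hdiff κ hcs hκm hcs2 ((t+2)/2)
        split_ifs at d1 d2 <;> omega
      · rw [hDττ' κ hκm (Or.inr hcs2) ((t+1)/2), hDττ' κ hκm (Or.inr hcs2) ((t+2)/2)]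
    · -- odd
      obtain ⟨K, hKdef, hK1, hKm⟩ : ∃ K, k = 2*K - 1 ∧ 1 ≤ K ∧ K ≤ m := ⟨c+1, by omega, by omega, by omega⟩
      subst hKdef
      have hv'exp := P1b hφv' hτ' hK1 hKm t
      have hvexp := P1b hφv hτ hK1 hKm t
      by_cases hKi : K = i
      · rw [hKi] at hv'exp hvexp ⊢
        rw [hv'i2] at hv'exp
        rw [hvi2] at hvexp
        have d1 := hdiff i le_rfl (by omega) hij ((t+1)/2)
        have d2 := hdiff i le_rfl (by omega) hij ((t+2)/2)
        split_ifs at hv'exp hvexp d1 d2 <;> omega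
      by_cases hKj : K = j
      · rw [hKj] at hv'exp hvexp ⊢
        rw [hv'j2] at hv'exp
        rw [hvj2] at hvexp
        rw [hDττ' j hj (Or.inr le_rfl) ((t+1)/2),
          hDττ' j hj (Or.inr le_rfl) ((t+2)/2)] at hv'exp
        split_ifs at hv'exp hvexp <;> omega
      rw [hvv' K hK1 hKm hKi hKj] at hv'exp
      rcases lt_or_ge K i with hcs | hcs
      · rw [hDττ' K hKm (Or.inl hcs) ((t+1)/2), hDττ' K hKm (Or.inl hcs) ((t+2)/2)] at hv'exp
        split_ifs at hv'exp hvexp <;> omega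
      rcases lt_or_ge K j with hcs2 | hcs2
      · have d1 := hdiff K hcs hKm hcs2 ((t+1)/2)
        have d2 := hdiff K hcs hKm hcs2 ((t+2)/2)
        split_ifs at hv'exp hvexp d1 d2 <;> omega
      · rw [hDττ' K hKm (Or.inr hcs2) ((t+1)/2), hDττ' K hKm (Or.inr hcs2) ((t+2)/2)] at hv'exp
        split_ifs at hv'exp hvexp <;> omega
  have hne : v' ≠ v := by
    intro he
    have h0 : v' (2*i-1) = v (2*i-1) := by rw [he]
    rw [hv'i1, hvi1] at h0
    omega
  refine ⟨⟨(bruhatLE_iff_counts (2*m) v' v).mpr hG1, hne⟩, ?_, ?_⟩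
  · -- length statement
    have hLV := len_phiRel hφv hτ
    have hLV' := len_phiRel hφv' hτ'
    have hLT := len_tau_cover hτ hi hij hj hba hmid
    have hset : (Finset.Icc 1 m).filter (· ∈ T ∪ {i, j})
        = ((Finset.Icc 1 m).filter (· ∈ T)) ∪ {i, j} := by
      ext x
      simp only [Finset.mem_filter, Finset.mem_union, Finset.mem_insert,
        Finset.mem_singleton, Finset.mem_Icc]
      constructor
      · rintro ⟨hx, h | h | h⟩
        · exact Or.inl ⟨hx, h⟩
        · exact Or.inr (Or.inl h)
        · exact Or.inr (Or.inr h)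
      · rintro (⟨hx, h⟩ | h | h)
        · exact ⟨hx, Or.inl h⟩
        · subst h; exact ⟨⟨by omega, by omega⟩, Or.inr (Or.inl rfl)⟩
        · subst h; exact ⟨⟨by omega, by omega⟩, Or.inr (Or.inr rfl)⟩
    have hdisj : Disjoint ((Finset.Icc 1 m).filter (· ∈ T)) ({i, j} : Finset ℕ) := by
      rw [Finset.disjoint_left]
      intro x hx hx2
      simp only [Finset.mem_filter] at hx
      simp only [Finset.mem_insert, Finset.mem_singleton] at hx2
      rcases hx2 with rfl | rfl
      · exact hiT hx.2
      · exact hjT hx.2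
    have hcard2 : ({i, j} : Finset ℕ).card = 2 := by
      rw [Finset.card_insert_of_notMem (by simp only [Finset.mem_singleton]; omega),
        Finset.card_singleton]
    have hcard : ((Finset.Icc 1 m).filter (· ∈ T ∪ {i, j})).card
        = ((Finset.Icc 1 m).filter (· ∈ T)).card + 2 := by
      rw [hset, Finset.card_union_of_disjoint hdisj, hcard2]
    omega
  · -- Goal 3
    intro u σ S hu hσ hφu hult hσle
    apply (bruhatLE_iff_counts (2*m) u v').mpr
    intro k hk t ht
    have hA := (bruhatLE_iff_counts (2*m) u v).mp hult.1
    have hB := (bruhatLE_iff_counts m σ (τ * Equiv.swap i j)).mp hσle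
    simp only [Finset.mem_Icc] at hk
    rcases Nat.even_or_odd k with ⟨c, hc⟩ | ⟨c, hc⟩
    · -- even
      obtain ⟨κ, hκdef, hκ1, hκm⟩ : ∃ κ, k = 2*κ ∧ 1 ≤ κ ∧ κ ≤ m := ⟨c, by omega⟩
      subst hκdef
      have hκmem : κ ∈ Finset.Icc 1 m := by simp only [Finset.mem_Icc]; omega
      rcases lt_or_ge κ i with hcs | hcs
      · have hAk := hA (2*κ) (by simp only [Finset.mem_Icc]; omega) t ht
        have he1 := P1a hφv hτ κ hκm t
        have he2 := P1a hφv' hτ' κ hκm t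
        rw [hDττ' κ hκm (Or.inl hcs) ((t+1)/2), hDττ' κ hκm (Or.inl hcs) ((t+2)/2)] at he2
        omega
      rcases lt_or_ge κ j with hcs2 | hcs2
      · rw [P1a hφu hσ κ hκm t, P1a hφv' hτ' κ hκm t]
        exact Nat.add_le_add (hB κ hκmem ((t+1)/2) (by omega)) (hB κ hκmem ((t+2)/2) (by omega))
      · have hAk := hA (2*κ) (by simp only [Finset.mem_Icc]; omega) t ht
        have he1 := P1a hφv hτ κ hκm t
        have he2 := P1a hφv' hτ' κ hκm t
        rw [hDττ' κ hκm (Or.inr hcs2) ((t+1)/2), hDττ' κ hκm (Or.inr hcs2) ((t+2)/2)] at he2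
        omega
    · -- odd
      obtain ⟨K, hKdef, hK1, hKm⟩ : ∃ K, k = 2*K - 1 ∧ 1 ≤ K ∧ K ≤ m := ⟨c+1, by omega, by omega, by omega⟩
      subst hKdef
      have hKmem : K ∈ Finset.Icc 1 m := by simp only [Finset.mem_Icc]; omega
      have hAk := hA (2*K - 1) (by simp only [Finset.mem_Icc]; omega) t ht
      have huexp := P1b hφu hσ hK1 hKm t
      have hv'exp := P1b hφv' hτ' hK1 hKm t
      have hvexp := P1b hφv hτ hK1 hKm t
      have hBs1 := hB K hKmem ((t+1)/2) (by omega)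
      have hBs2 := hB K hKmem ((t+2)/2) (by omega)
      by_cases hKi : K = i
      · rw [hKi] at hv'exp hvexp huexp hAk hBs1 hBs2 ⊢
        rw [hv'i2] at hv'exp
        rw [hvi2] at hvexp
        have d1 := hdiff i le_rfl (by omega) hij ((t+1)/2)
        have d2 := hdiff i le_rfl (by omega) hij ((t+2)/2)
        split_ifs at hv'exp hvexp huexp d1 d2 <;> omega
      by_cases hKj : K = j
      · rw [hKj] at hv'exp hvexp huexp hAk hBs1 hBs2 ⊢
        rw [hv'j2] at hv'exp
        rw [hvj2] at hvexp
        rw [hDττ' j hj (Or.inr le_rfl) ((t+1)/2),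
          hDττ' j hj (Or.inr le_rfl) ((t+2)/2)] at hv'exp
        have hσK1 : 1 ≤ σ j := (permOn_bounds hσ hjS).1
        have hu2K : u (2*j) = 2*σ j - 1 ∨ u (2*j) = 2*σ j := by
          by_cases hKS : j ∈ S
          · exact Or.inl (phiRel_mem hφu hjS hKS).2
          · exact Or.inr (phiRel_not_mem hφu hjS hKS).2
        have hK1mem : j - 1 ∈ Finset.Icc 1 m := by simp only [Finset.mem_Icc]; omega
        have hBs2' := hB (j-1) hK1mem ((t+2)/2) (by omega)
        have hstpσ := hstep σ j (by omega) ((t+2)/2)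
        have hstpτ' := hstep (τ * Equiv.swap i j) j (by omega) ((t+2)/2)
        rw [hτ'j] at hstpτ'
        rw [hDττ' j hj (Or.inr le_rfl) ((t+2)/2)] at hstpτ'
        rw [hDττ' j hj (Or.inr le_rfl) ((t+1)/2)] at hBs1
        rw [hDττ' j hj (Or.inr le_rfl) ((t+2)/2)] at hBs2
        split_ifs at hv'exp hvexp huexp hstpσ hstpτ' <;> omega
      rcases lt_or_ge K i with hcs | hcs
      · rw [hvv' K hK1 hKm hKi hKj] at hv'exp
        rw [hDττ' K hKm (Or.inl hcs) ((t+1)/2), hDττ' K hKm (Or.inl hcs) ((t+2)/2)] at hv'exp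
        split_ifs at hv'exp hvexp <;> omega
      rcases lt_or_ge K j with hcs2 | hcs2
      · -- middle block
        rw [hvv' K hK1 hKm hKi hKj] at hv'exp
        have d1 := hdiff K hcs hKm hcs2 ((t+1)/2)
        have d2 := hdiff K hcs hKm hcs2 ((t+2)/2)
        have hσK1 : 1 ≤ σ K := (permOn_bounds hσ hKmem).1
        have hτK1 : 1 ≤ τ K := (permOn_bounds hτ hKmem).1
        have hu2K : u (2*K) = 2*σ K - 1 ∨ u (2*K) = 2*σ K := by
          by_cases hKS : K ∈ S
          · exact Or.inl (phiRel_mem hφu hKmem hKS).2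
          · exact Or.inr (phiRel_not_mem hφu hKmem hKS).2
        have hvK : v (2*K) = 2*τ K - 1 ∨ v (2*K) = 2*τ K := by
          by_cases hKT : K ∈ T
          · exact Or.inl (phiRel_mem hφv hKmem hKT).2
          · exact Or.inr (phiRel_not_mem hφv hKmem hKT).2
        have hτKi : τ K ≠ τ i := fun he => by have := τ.injective he; omega
        have hτKj : τ K ≠ τ j := fun he => by have := τ.injective he; omega
        have hcovK := hmid K (by omega) hcs2
        have hK1mem : K - 1 ∈ Finset.Icc 1 m := by simp only [Finset.mem_Icc]; omega
        have hBs2' := hB (K-1) hK1mem ((t+2)/2) (by omega)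
        have hstpσ := hstep σ K hK1 ((t+2)/2)
        have hstpτ' := hstep (τ * Equiv.swap i j) K hK1 ((t+2)/2)
        rw [hτ'q K hKi hKj] at hstpτ'
        split_ifs at hv'exp hvexp huexp d1 d2 hstpσ hstpτ' <;> omega
      · rw [hvv' K hK1 hKm hKi hKj] at hv'exp
        rw [hDττ' K hKm (Or.inr hcs2) ((t+1)/2), hDττ' K hKm (Or.inr hcs2) ((t+2)/2)] at hv'exp
        split_ifs at hv'exp hvexp <;> omega


end WachsPaper
end

section
/- Let m ≥ 1, u, v ∈ W(S_{2m+1}) with u < v in the Bruhat order of S_{2m+1}, let i := pos(v) = v^{-1}(2m+1), and suppose pos(v) < pos(u). Then u ≤ z, where z := v(i,i+2) if v < v(i+1,i+2), and z := v(i+1,i+2) otherwise (here v(a,b) denotes v multiplied on the right by the transposition of a and b). -/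
open Finset
open scoped Classical

namespace WachsPaper

lemma perm_apply_inv_self (v : Equiv.Perm ℕ) (x : ℕ) : v (v⁻¹ x) = x :=
  (Equiv.eq_symm_apply v).mp rfl

lemma perm_inv_apply_self (v : Equiv.Perm ℕ) (x : ℕ) : v⁻¹ (v x) = x :=
  Equiv.Perm.inv_eq_iff_eq.mpr rfl

def cnt (t : ℕ) (A : Finset ℕ) : ℕ := (A.filter (fun x => t ≤ x)).card

def Pk (w : Equiv.Perm ℕ) (k : ℕ) : Finset ℕ := (Finset.Icc 1 k).image ⇑w

def PairClosed (A : Finset ℕ) : Prop := ∀ a : ℕ, 2*a+1 ∈ A ↔ 2*a+2 ∈ A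

lemma cnt_insert (t x : ℕ) (A : Finset ℕ) (hx : x ∉ A) :
    cnt t (insert x A) = cnt t A + if t ≤ x then 1 else 0 := by
  unfold cnt
  rw [Finset.filter_insert]
  split_ifs with h
  · rw [Finset.card_insert_of_notMem (fun hc => hx (Finset.mem_of_mem_filter _ hc))]
  · simp

lemma cnt_mono_subset (t : ℕ) {A B : Finset ℕ} (h : A ⊆ B) : cnt t A ≤ cnt t B :=
  Finset.card_le_card (Finset.filter_subset_filter _ h)

lemma cnt_succ (t : ℕ) (A : Finset ℕ) :
    cnt t A = cnt (t+1) A + if t ∈ A then 1 else 0 := by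
  unfold cnt
  by_cases h : t ∈ A
  · simp only [h, if_true]
    have he : A.filter (fun x => t ≤ x) = insert t (A.filter (fun x => t+1 ≤ x)) := by
      ext x
      simp only [Finset.mem_filter, Finset.mem_insert]
      constructor
      · rintro ⟨hx, hle⟩
        rcases eq_or_lt_of_le hle with h' | h'
        · left; omega
        · right; exact ⟨hx, by omega⟩
      · rintro (rfl | ⟨hx, hle⟩)
        · exact ⟨h, le_refl _⟩
        · exact ⟨hx, by omega⟩
    rw [he, Finset.card_insert_of_notMem (by simp only [Finset.mem_filter]; omega)]
  · simp only [h, if_false, add_zero]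
    congr 1
    ext x
    simp only [Finset.mem_filter]
    constructor
    · rintro ⟨hx, hle⟩
      refine ⟨hx, ?_⟩
      rcases eq_or_lt_of_le hle with h' | h'
      · exact absurd (h' ▸ hx) h
      · omega
    · rintro ⟨hx, hle⟩
      exact ⟨hx, by omega⟩

lemma PairClosed.even_card {A : Finset ℕ} (hA : PairClosed A) (h0 : 0 ∉ A) :
    Even A.card := by
  classical
  have key : (A.filter (fun x => x % 2 = 1)).card = (A.filter (fun x => x % 2 = 0)).card := by
    refine Finset.card_bij' (fun x _ => x + 1) (fun x _ => x - 1) ?hi ?hj ?left ?right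
    case hi =>
      intro a ha
      simp only [Finset.mem_filter] at ha ⊢
      obtain ⟨ha1, ha2⟩ := ha
      have h1 : a = 2 * (a/2) + 1 := by omega
      refine ⟨?_, by omega⟩
      have := (hA (a/2)).mp (by rw [← h1]; exact ha1)
      have h2 : a + 1 = 2 * (a/2) + 2 := by omega
      rw [h2]; exact this
    case hj =>
      intro a ha
      simp only [Finset.mem_filter] at ha ⊢
      obtain ⟨ha1, ha2⟩ := ha
      have hane : a ≠ 0 := fun h => h0 (h ▸ ha1)
      have h1 : a = 2 * ((a-2)/2) + 2 := by omega
      refine ⟨?_, by omega⟩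
      have := (hA ((a-2)/2)).mpr (by rw [← h1]; exact ha1)
      have h2 : a - 1 = 2 * ((a-2)/2) + 1 := by omega
      rw [h2]; exact this
    case left => intro a ha; show a + 1 - 1 = a; omega
    case right =>
      intro a ha
      simp only [Finset.mem_filter] at ha
      have : a ≠ 0 := fun h => h0 (h ▸ ha.1)
      show a - 1 + 1 = a
      omega
  have hsplit := Finset.card_filter_add_card_filter_not (s := A)
    (p := fun x => x % 2 = 1)
  have he : A.filter (fun x => ¬ (x % 2 = 1)) = A.filter (fun x => x % 2 = 0) := by
    apply Finset.filter_congr; intro x _; constructor <;> intro h <;> omega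
  rw [he] at hsplit
  exact ⟨(A.filter (fun x => x % 2 = 1)).card, by omega⟩

lemma PairClosed.filter_ge {A : Finset ℕ} (hA : PairClosed A) (c : ℕ) :
    PairClosed (A.filter (fun x => 2*c+1 ≤ x)) := by
  intro a
  simp only [Finset.mem_filter]
  constructor <;> rintro ⟨h1, h2⟩
  · exact ⟨(hA a).mp h1, by omega⟩
  · exact ⟨(hA a).mpr h1, by omega⟩

lemma cnt_odd_even {A : Finset ℕ} (hA : PairClosed A) (h0 : 0 ∉ A) (c : ℕ) :
    Even (cnt (2*c+1) A) := by
  apply (hA.filter_ge c).even_card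
  intro h
  simp only [Finset.mem_filter] at h
  omega

lemma getD_sort_le_iff (A : Finset ℕ) (t r : ℕ) (hr : r < A.card) :
    t ≤ (Finset.sort A (· ≤ ·)).getD r 0 ↔ A.card - r ≤ cnt t A := by
  set l := Finset.sort A (· ≤ ·) with hl
  have hlen : l.length = A.card := Finset.length_sort _
  have hrl : r < l.length := by omega
  have hsorted : l.Pairwise (· < ·) := (Finset.sortedLT_sort A).pairwise
  have hmono : ∀ a b (ha : a < l.length) (hb : b < l.length), a < b → l[a] < l[b] :=
    List.pairwise_iff_getElem.mp hsorted
  have hgetD : l.getD r 0 = l[r] := List.getD_eq_getElem l 0 hrl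
  have hmem : ∀ x, x ∈ A ↔ ∃ j : ℕ, ∃ h : j < l.length, l[j] = x := by
    intro x
    rw [← Finset.mem_sort (α := ℕ) (· ≤ ·), ← hl, List.mem_iff_getElem]
  constructor
  · intro ht
    rw [hgetD] at ht
    have hinj : Set.InjOn (fun j => l.getD j 0) (Finset.Ico r l.length) := by
      intro a ha b hb hab
      simp only [Finset.coe_Ico, Set.mem_Ico] at ha hb
      simp only [List.getD_eq_getElem l 0 ha.2, List.getD_eq_getElem l 0 hb.2] at hab
      rcases lt_trichotomy a b with h | h | h
      · have := hmono a b ha.2 hb.2 h; omega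
      · exact h
      · have := hmono b a hb.2 ha.2 h; omega
    have hsub : (Finset.Ico r l.length).image (fun j => l.getD j 0) ⊆
        A.filter (fun x => t ≤ x) := by
      intro x hx
      simp only [Finset.mem_image, Finset.mem_Ico] at hx
      obtain ⟨j, ⟨hj1, hj2⟩, rfl⟩ := hx
      rw [Finset.mem_filter]
      rw [List.getD_eq_getElem l 0 hj2]
      constructor
      · rw [hmem]; exact ⟨j, hj2, rfl⟩
      · rcases eq_or_lt_of_le hj1 with h' | h'
        · subst h'; exact ht
        · have := hmono r j hrl hj2 h'; omega
    have hcard := Finset.card_le_card hsub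
    rw [Finset.card_image_of_injOn hinj, Nat.card_Ico] at hcard
    unfold cnt
    omega
  · intro hc
    by_contra hcon
    push_neg at hcon
    rw [hgetD] at hcon
    have hsub : A.filter (fun x => t ≤ x) ⊆
        (Finset.Ico (r+1) l.length).image (fun j => l.getD j 0) := by
      intro x hx
      rw [Finset.mem_filter] at hx
      obtain ⟨hxA, hxt⟩ := hx
      obtain ⟨j, hj, hjx⟩ := (hmem x).mp hxA
      simp only [Finset.mem_image, Finset.mem_Ico]
      refine ⟨j, ⟨?_, hj⟩, by rw [List.getD_eq_getElem l 0 hj]; exact hjx⟩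
      by_contra hjr
      push_neg at hjr
      have hle : l[j] ≤ l[r] := by
        rcases eq_or_lt_of_le (by omega : j ≤ r) with h' | h'
        · subst h'; exact le_refl _
        · exact le_of_lt (hmono j r hj hrl h')
      omega
    have hcard := Finset.card_le_card hsub
    have hcard2 := Finset.card_image_le (s := Finset.Ico (r+1) l.length)
      (f := fun j => l.getD j 0)
    rw [Nat.card_Ico] at hcard2
    unfold cnt at hc
    omega

lemma sorted_getD_le_iff (A B : Finset ℕ) (hcard : A.card = B.card) :
    (∀ r, (Finset.sort A (· ≤ ·)).getD r 0 ≤ (Finset.sort B (· ≤ ·)).getD r 0) ↔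
    (∀ t, cnt t A ≤ cnt t B) := by
  constructor
  · intro h t
    by_cases hc : cnt t A = 0
    · omega
    have hcA : cnt t A ≤ A.card := Finset.card_le_card (Finset.filter_subset _ _)
    set c := cnt t A with hcdef
    have hr : A.card - c < A.card := by omega
    have h1 : t ≤ (Finset.sort A (· ≤ ·)).getD (A.card - c) 0 := by
      rw [getD_sort_le_iff A t _ hr]
      omega
    have h2 : t ≤ (Finset.sort B (· ≤ ·)).getD (A.card - c) 0 :=
      le_trans h1 (h _)
    have h3 := (getD_sort_le_iff B t (A.card - c) (by omega)).mp h2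
    omega
  · intro h r
    by_cases hrA : r < A.card
    · set t := (Finset.sort A (· ≤ ·)).getD r 0 with ht
      have h1 : A.card - r ≤ cnt t A :=
        (getD_sort_le_iff A t r hrA).mp (le_refl _)
      have h2 : B.card - r ≤ cnt t B := by
        have := h t; omega
      exact (getD_sort_le_iff B t r (by omega)).mpr h2
    · rw [List.getD_eq_default]
      · omega
      · rw [Finset.length_sort]; omega


/-- partner of a value -/
def ptn (x : ℕ) : ℕ := if x % 2 = 0 then x - 1 else x + 1

lemma permOn_apply_mem {n : ℕ} {w : Equiv.Perm ℕ} (hw : PermOn n w) {x : ℕ}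
    (hx : x ∈ Finset.Icc 1 n) : w x ∈ Finset.Icc 1 n := by
  by_contra hmem
  have h1 := hw _ hmem
  have h2 : w x = x := Equiv.injective w h1
  rw [h2] at hmem
  exact hmem hx

lemma permOn_inv {n : ℕ} {w : Equiv.Perm ℕ} (hw : PermOn n w) : PermOn n w⁻¹ := by
  intro i hi
  have := hw i hi
  exact (Equiv.Perm.inv_eq_iff_eq).mpr this.symm

lemma pos_mem {m : ℕ} {v : Equiv.Perm ℕ} (hv : IsWachs (2*m+1) v) :
    pos (2*m+1) v ∈ Finset.Icc 1 (2*m+1) :=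
  permOn_apply_mem (permOn_inv hv.1) (by simp only [Finset.mem_Icc]; omega)

lemma apply_pos {n : ℕ} (v : Equiv.Perm ℕ) : v (pos n v) = n :=
  perm_apply_inv_self v n

lemma eq_pos_of_apply {n : ℕ} {v : Equiv.Perm ℕ} {l : ℕ} (h : v l = n) :
    l = pos n v := by
  unfold pos
  rw [← h, perm_inv_apply_self]

lemma wachs_partner {m : ℕ} {u : Equiv.Perm ℕ} (hu : IsWachs (2*m+1) u) {x : ℕ}
    (h1 : 1 ≤ x) (h2 : x ≤ 2*m) :
    u⁻¹ (ptn x) = u⁻¹ x + 1 ∨ u⁻¹ (ptn x) + 1 = u⁻¹ x := by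
  have hmem : x ∈ Finset.Icc 1 (2*m+1-1) := by simp [Finset.mem_Icc]; omega
  have habs := hu.2 x hmem
  have hstar : star (2*m+1) x = ptn x := by
    unfold star ptn
    split_ifs <;> omega
  rw [hstar] at habs
  have hne : u⁻¹ (ptn x) ≠ u⁻¹ x := by
    intro h
    have := Equiv.injective u⁻¹ h
    unfold ptn at this
    split_ifs at this <;> omega
  rw [abs_le] at habs
  omega

lemma ptn_bounds {m x : ℕ} (h1 : 1 ≤ x) (h2 : x ≤ 2*m) :
    1 ≤ ptn x ∧ ptn x ≤ 2*m := by
  unfold ptn; split_ifs <;> omega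

lemma mem_Pk {w : Equiv.Perm ℕ} {k x : ℕ} :
    x ∈ Pk w k ↔ ∃ l, 1 ≤ l ∧ l ≤ k ∧ w l = x := by
  unfold Pk
  simp only [Finset.mem_image, Finset.mem_Icc]
  constructor
  · rintro ⟨l, ⟨h1, h2⟩, h3⟩; exact ⟨l, h1, h2, h3⟩
  · rintro ⟨l, h1, h2, h3⟩; exact ⟨l, ⟨h1, h2⟩, h3⟩

lemma card_Pk (w : Equiv.Perm ℕ) (k : ℕ) : (Pk w k).card = k := by
  unfold Pk
  rw [Finset.card_image_of_injective _ (Equiv.injective w), Nat.card_Icc]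
  omega

lemma Pk_succ (w : Equiv.Perm ℕ) (k : ℕ) :
    Pk w (k+1) = insert (w (k+1)) (Pk w k) := by
  unfold Pk
  rw [← Finset.image_insert]
  congr 1
  ext x
  simp only [Finset.mem_Icc, Finset.mem_insert]
  omega

lemma Pk_subset (w : Equiv.Perm ℕ) {k k' : ℕ} (h : k ≤ k') : Pk w k ⊆ Pk w k' :=
  Finset.image_subset_image (Finset.Icc_subset_Icc (le_refl _) h)

lemma zero_not_mem_Pk {m : ℕ} {w : Equiv.Perm ℕ} (hw : IsWachs (2*m+1) w) {k : ℕ}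
    (hk : k ≤ 2*m+1) : 0 ∉ Pk w k := by
  rw [mem_Pk]
  rintro ⟨l, h1, h2, h3⟩
  have : w l ∈ Finset.Icc 1 (2*m+1) :=
    permOn_apply_mem hw.1 (by simp [Finset.mem_Icc]; omega)
  rw [h3] at this
  simp [Finset.mem_Icc] at this

lemma apply_mem_Icc {m : ℕ} {w : Equiv.Perm ℕ} (hw : IsWachs (2*m+1) w) {l : ℕ}
    (h1 : 1 ≤ l) (h2 : l ≤ 2*m+1) : 1 ≤ w l ∧ w l ≤ 2*m+1 := by
  have := permOn_apply_mem hw.1 (x := l) (by simp [Finset.mem_Icc]; omega)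
  simpa [Finset.mem_Icc] using this

lemma pairClosed_insert_pair {A : Finset ℕ} (hA : PairClosed A) (a : ℕ) :
    PairClosed (insert (2*a+1) (insert (2*a+2) A)) := by
  intro c
  simp only [Finset.mem_insert]
  by_cases hca : c = a
  · subst hca; constructor <;> intro _
    · right; left; rfl
    · left; rfl
  · constructor <;> rintro (h | h | h)
    · omega
    · omega
    · right; right; exact (hA c).mp h
    · omega
    · omega
    · right; right; exact (hA c).mpr h

/-- key step: if the first `2j` positions carry a pair-closed value set and the value at
position `2j+1` is not `2m+1`, then the partner of that value sits at position `2j+2`. -/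
lemma partner_next {m : ℕ} {u : Equiv.Perm ℕ} (hu : IsWachs (2*m+1) u) {j : ℕ}
    (hPC : PairClosed (Pk u (2*j))) (hj : 2*j+1 ≤ 2*m+1) (hx : u (2*j+1) ≠ 2*m+1) :
    u (2*j+2) = ptn (u (2*j+1)) := by
  set x := u (2*j+1) with hxdef
  have hxb : 1 ≤ x ∧ x ≤ 2*m+1 := apply_mem_Icc hu (by omega) hj
  have hx2m : x ≤ 2*m := by omega
  have hinv : u⁻¹ x = 2*j+1 := by rw [hxdef, perm_inv_apply_self]
  have hptn := wachs_partner hu hxb.1 hx2m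
  rw [hinv] at hptn
  have hptnb := ptn_bounds (m := m) hxb.1 hx2m
  rcases hptn with h | h
  · -- u⁻¹ (ptn x) = 2j+2
    have : u (2*j+2) = ptn x := by
      rw [← h, perm_apply_inv_self]
    exact this
  · -- u⁻¹ (ptn x) = 2j : contradiction
    exfalso
    rcases Nat.eq_zero_or_pos j with hj0 | hjpos
    · subst hj0
      simp only [Nat.mul_zero, Nat.zero_add] at h
      have h0 : u⁻¹ (ptn x) = 0 := by omega
      have : ptn x = u 0 := by rw [← h0, perm_apply_inv_self]
      have hu0 : u 0 = 0 := hu.1 0 (by simp)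
      omega
    · have hmem : ptn x ∈ Pk u (2*j) := by
        rw [mem_Pk]
        refine ⟨2*j, by omega, le_refl _, ?_⟩
        have : u⁻¹ (ptn x) = 2*j := by omega
        rw [← this, perm_apply_inv_self]
      have hxmem : x ∈ Pk u (2*j) := by
        unfold ptn at hmem
        by_cases hpar : x % 2 = 0
        · rw [if_pos hpar] at hmem
          have hrw : x = 2*((x-2)/2)+2 := by omega
          have hrw2 : x - 1 = 2*((x-2)/2)+1 := by omega
          rw [hrw2] at hmem
          rw [hrw]
          exact (hPC _).mp hmem
        · rw [if_neg hpar] at hmem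
          have hrw : x = 2*((x-1)/2)+1 := by omega
          have hrw2 : x + 1 = 2*((x-1)/2)+2 := by omega
          rw [hrw2] at hmem
          rw [hrw]
          exact (hPC _).mpr hmem
      rw [mem_Pk] at hxmem
      obtain ⟨l, hl1, hl2, hl3⟩ := hxmem
      have : l = 2*j+1 := Equiv.injective u (by rw [hl3, hxdef])
      omega

lemma pairClosed_Pk {m : ℕ} {u : Equiv.Perm ℕ} (hu : IsWachs (2*m+1) u) :
    ∀ j : ℕ, 2*j < pos (2*m+1) u → PairClosed (Pk u (2*j)) := by
  have hposmem := pos_mem hu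
  simp only [Finset.mem_Icc] at hposmem
  intro j
  induction j with
  | zero =>
    intro _
    have : Pk u 0 = ∅ := by
      unfold Pk
      rw [Finset.Icc_eq_empty (by omega)]
      simp
    rw [this]
    intro a; simp
  | succ j ih =>
    intro hj
    have hPC := ih (by omega)
    have hj1 : 2*j+1 ≤ 2*m+1 := by omega
    have hxne : u (2*j+1) ≠ 2*m+1 := by
      intro h
      have := eq_pos_of_apply h
      omega
    have hnext := partner_next hu hPC hj1 hxne
    have h1 : Pk u (2*(j+1)) = insert (u (2*j+2)) (insert (u (2*j+1)) (Pk u (2*j))) := by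
      have e1 : 2*(j+1) = (2*j+1)+1 := by omega
      rw [e1, Pk_succ, Pk_succ]
    rw [h1, hnext]
    set x := u (2*j+1) with hxdef
    have hxb : 1 ≤ x ∧ x ≤ 2*m+1 := apply_mem_Icc hu (by omega) hj1
    have hx2m : x ≤ 2*m := by omega
    by_cases hpar : x % 2 = 0
    · have hrw : ptn x = 2*((x-2)/2)+1 := by unfold ptn; rw [if_pos hpar]; omega
      have hrw2 : x = 2*((x-2)/2)+2 := by omega
      rw [hrw]
      nth_rewrite 2 [hrw2]
      exact pairClosed_insert_pair hPC _
    · have hrw : ptn x = 2*((x-1)/2)+2 := by unfold ptn; rw [if_neg hpar]; omega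
      have hrw2 : x = 2*((x-1)/2)+1 := by omega
      rw [hrw]
      nth_rewrite 2 [hrw2]
      rw [Finset.insert_comm]
      exact pairClosed_insert_pair hPC _

lemma pos_odd {m : ℕ} {u : Equiv.Perm ℕ} (hu : IsWachs (2*m+1) u) :
    pos (2*m+1) u % 2 = 1 := by
  by_contra hpar
  have hposmem := pos_mem hu
  simp only [Finset.mem_Icc] at hposmem
  set p := pos (2*m+1) u with hp
  have hpe : p % 2 = 0 := by omega
  have hj : p = 2*((p-2)/2) + 2 := by omega
  set j := (p-2)/2 with hjdef
  have hPC := pairClosed_Pk hu j (by omega)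
  have hxne : u (2*j+1) ≠ 2*m+1 := by
    intro h
    have := eq_pos_of_apply h
    omega
  have hnext := partner_next hu hPC (by omega) hxne
  have happly : u (2*j+2) = 2*m+1 := by
    have : 2*j+2 = p := by omega
    rw [this, hp]
    exact apply_pos _
  have hxb : 1 ≤ u (2*j+1) ∧ u (2*j+1) ≤ 2*m+1 := apply_mem_Icc hu (by omega) (by omega)
  have hptnb := ptn_bounds (m := m) hxb.1 (by omega)
  omega


lemma cnt_insert2 (t x y : ℕ) (Q : Finset ℕ) (hx : x ∉ insert y Q) (hy : y ∉ Q) :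
    cnt t (insert x (insert y Q)) =
      cnt t Q + (if t ≤ x then 1 else 0) + (if t ≤ y then 1 else 0) := by
  rw [cnt_insert t x _ hx, cnt_insert t y _ hy]
  ring

/-- Case A, column i+1 : from `cnt A ≤ cnt (Q ∪ {2β+1, n})` deduce
`cnt A ≤ cnt (Q ∪ {2β+1, 2β+2})`. -/
lemma caseA_count {A Q : Finset ℕ} {β n : ℕ} (hA : PairClosed A) (hA0 : 0 ∉ A)
    (hQ : PairClosed Q) (hQ0 : 0 ∉ Q)
    (hb1Q : 2*β+1 ∉ Q) (hb2Q : 2*β+2 ∉ Q) (hnQ : n ∉ Q) (hn : 2*β+2 < n)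
    (h : ∀ t, cnt t A ≤ cnt t (insert (2*β+1) (insert n Q))) :
    ∀ t, cnt t A ≤ cnt t (insert (2*β+1) (insert (2*β+2) Q)) := by
  have hb1n : (2*β+1 : ℕ) ∉ insert n Q := by
    simp only [Finset.mem_insert]; push_neg; exact ⟨by omega, hb1Q⟩
  have hb12 : (2*β+1 : ℕ) ∉ insert (2*β+2) Q := by
    simp only [Finset.mem_insert]; push_neg; exact ⟨by omega, hb1Q⟩
  have hrw : ∀ t, cnt t (insert (2*β+1) (insert n Q)) =
      cnt t Q + (if t ≤ 2*β+1 then 1 else 0) + (if t ≤ n then 1 else 0) :=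
    fun t => cnt_insert2 t _ _ Q hb1n hnQ
  have hrw2 : ∀ t, cnt t (insert (2*β+1) (insert (2*β+2) Q)) =
      cnt t Q + (if t ≤ 2*β+1 then 1 else 0) + (if t ≤ 2*β+2 then 1 else 0) :=
    fun t => cnt_insert2 t _ _ Q hb12 hb2Q
  -- the odd-threshold bound
  have hodd : ∀ c, 2*β+2 < 2*c+1 → cnt (2*c+1) A ≤ cnt (2*c+1) Q := by
    intro c hc
    have h1 := h (2*c+1)
    rw [hrw] at h1
    rw [if_neg (by omega : ¬ (2*c+1 ≤ 2*β+1))] at h1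
    obtain ⟨a, ha⟩ := cnt_odd_even hA hA0 c
    obtain ⟨q, hq⟩ := cnt_odd_even hQ hQ0 c
    by_cases hcn : 2*c+1 ≤ n
    · rw [if_pos hcn] at h1; omega
    · rw [if_neg hcn] at h1; omega
  intro t
  rw [hrw2]
  by_cases ht : t ≤ 2*β+2
  · have h1 := h t
    rw [hrw] at h1
    rw [if_pos (by omega : t ≤ n)] at h1
    rw [if_pos ht]
    omega
  · rw [if_neg (by omega : ¬ t ≤ 2*β+1), if_neg ht]
    -- need cnt t A ≤ cnt t Q  for t > 2β+2
    by_cases hpar : t % 2 = 1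
    · have : t = 2*((t-1)/2)+1 := by omega
      rw [this]
      exact hodd _ (by omega)
    ·
      set c := (t-2)/2 with hc
      have htc : t = 2*c+2 := by omega
      by_contra hcon
      push_neg at hcon
      rw [htc] at hcon
      have sA := cnt_succ (2*c+2) A
      have sQ := cnt_succ (2*c+2) Q
      have sA1 := cnt_succ (2*c+1) A
      have sQ1 := cnt_succ (2*c+1) Q
      have e23 : 2*c+2+1 = 2*c+3 := by omega
      have e12 : 2*c+1+1 = 2*c+2 := by omega
      rw [e23] at sA sQ
      rw [e12] at sA1 sQ1
      have h3 : cnt (2*c+3) A ≤ cnt (2*c+3) Q := by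
        have := hodd (c+1) (by omega)
        have e : 2*(c+1)+1 = 2*c+3 := by omega
        rw [e] at this
        exact this
      have h1 := h (2*c+1)
      rw [hrw] at h1
      rw [if_neg (by omega : ¬ (2*c+1 ≤ 2*β+1))] at h1
      have hifn : (if 2*c+1 ≤ n then (1:ℕ) else 0) ≤ 1 := by split_ifs <;> omega
      have hAmp : 2*c+2 ∈ A → 2*c+1 ∈ A := (hA c).mpr
      have hQmp : 2*c+1 ∈ Q → 2*c+2 ∈ Q := (hQ c).mp
      by_cases m2 : 2*c+2 ∈ A <;> by_cases m1 : 2*c+1 ∈ A <;>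
        by_cases m4 : 2*c+2 ∈ Q <;> by_cases m3 : 2*c+1 ∈ Q <;>
        first
          | (exact absurd (hAmp m2) m1)
          | (exact absurd (hQmp m3) m4)
          | (simp only [m1, m2, m3, m4, if_true, if_false] at sA sQ sA1 sQ1; omega)
  
/-- Case B, column i+1. -/
lemma caseB_count {A Q : Finset ℕ} {β n : ℕ} (hA : PairClosed A) (hA0 : 0 ∉ A)
    (hQ : PairClosed Q) (hQ0 : 0 ∉ Q)
    (hb1Q : 2*β+1 ∉ Q) (hb2Q : 2*β+2 ∉ Q) (hnQ : n ∉ Q) (hn : 2*β+2 < n)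
    (h : ∀ t, cnt t A ≤ cnt t (insert (2*β+2) (insert n Q))) :
    ∀ t, cnt t A ≤ cnt t (insert (2*β+1) (insert n Q)) := by
  have hb1n : (2*β+1 : ℕ) ∉ insert n Q := by
    simp only [Finset.mem_insert]; push_neg; exact ⟨by omega, hb1Q⟩
  have hb2n : (2*β+2 : ℕ) ∉ insert n Q := by
    simp only [Finset.mem_insert]; push_neg; exact ⟨by omega, hb2Q⟩
  have hrw : ∀ t, cnt t (insert (2*β+2) (insert n Q)) =
      cnt t Q + (if t ≤ 2*β+2 then 1 else 0) + (if t ≤ n then 1 else 0) :=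
    fun t => cnt_insert2 t _ _ Q hb2n hnQ
  have hrw2 : ∀ t, cnt t (insert (2*β+1) (insert n Q)) =
      cnt t Q + (if t ≤ 2*β+1 then 1 else 0) + (if t ≤ n then 1 else 0) :=
    fun t => cnt_insert2 t _ _ Q hb1n hnQ
  intro t
  rw [hrw2]
  by_cases ht : t = 2*β+2
  · subst ht
    rw [if_neg (by omega : ¬ (2*β+2 ≤ 2*β+1)), if_pos (by omega : 2*β+2 ≤ n)]
    have sA := cnt_succ (2*β+2) A
    have sQ := cnt_succ (2*β+2) Q
    have e23 : 2*β+2+1 = 2*β+3 := by omega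
    rw [e23] at sA sQ
    have h3 : cnt (2*β+3) A ≤ cnt (2*β+3) Q := by
      have h1 := h (2*β+3)
      rw [hrw] at h1
      rw [if_neg (by omega : ¬ (2*β+3 ≤ 2*β+2))] at h1
      obtain ⟨a, ha⟩ := cnt_odd_even hA hA0 (β+1)
      obtain ⟨q, hq⟩ := cnt_odd_even hQ hQ0 (β+1)
      have e : 2*(β+1)+1 = 2*β+3 := by omega
      rw [e] at ha hq
      by_cases hcn : 2*β+3 ≤ n
      · rw [if_pos hcn] at h1; omega
      · rw [if_neg hcn] at h1; omega
    have hifA : (if 2*β+2 ∈ A then (1:ℕ) else 0) ≤ 1 := by split_ifs <;> omega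
    rw [if_neg hb2Q] at sQ
    omega
  · have h1 := h t
    rw [hrw] at h1
    have : (if t ≤ 2*β+1 then (1:ℕ) else 0) = (if t ≤ 2*β+2 then 1 else 0) := by
      split_ifs <;> omega
    rw [this]
    exact h1

/-- Case A, column i. -/
lemma caseAi_count {A' A Q : Finset ℕ} {β n : ℕ} (hsub : A' ⊆ A)
    (hb1Q : 2*β+1 ∉ Q) (hb2Q : 2*β+2 ∉ Q) (hnQ : n ∉ Q) (hn : 2*β+2 < n)
    (h1 : ∀ t, cnt t A' ≤ cnt t (insert n Q))
    (h2 : ∀ t, cnt t A ≤ cnt t (insert (2*β+1) (insert (2*β+2) Q))) :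
    ∀ t, cnt t A' ≤ cnt t (insert (2*β+2) Q) := by
  have hb12 : (2*β+1 : ℕ) ∉ insert (2*β+2) Q := by
    simp only [Finset.mem_insert]; push_neg; exact ⟨by omega, hb1Q⟩
  intro t
  rw [cnt_insert t _ _ hb2Q]
  by_cases ht : t ≤ 2*β+2
  · rw [if_pos ht]
    have := h1 t
    rw [cnt_insert t _ _ hnQ, if_pos (by omega : t ≤ n)] at this
    omega
  · rw [if_neg ht]
    have hAA := cnt_mono_subset t hsub
    have := h2 t
    rw [cnt_insert2 t _ _ Q hb12 hb2Q,
      if_neg (by omega : ¬ t ≤ 2*β+1), if_neg ht] at this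
    omega


lemma sortedPrefix_perm_eq (w : Equiv.Perm ℕ) (k : ℕ) :
    sortedPrefix ⇑w k = Finset.sort (Pk w k) (· ≤ ·) := rfl

lemma bruhat_at_of_cnt {u z : Equiv.Perm ℕ} {k : ℕ}
    (h : ∀ t, cnt t (Pk u k) ≤ cnt t (Pk z k)) :
    ∀ r, (sortedPrefix ⇑u k).getD r 0 ≤ (sortedPrefix ⇑z k).getD r 0 := by
  rw [sortedPrefix_perm_eq, sortedPrefix_perm_eq]
  exact (sorted_getD_le_iff _ _ (by rw [card_Pk, card_Pk])).mpr h

lemma cnt_of_bruhat_at {u v : Equiv.Perm ℕ} {k : ℕ}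
    (h : ∀ r, (sortedPrefix ⇑u k).getD r 0 ≤ (sortedPrefix ⇑v k).getD r 0) :
    ∀ t, cnt t (Pk u k) ≤ cnt t (Pk v k) := by
  apply (sorted_getD_le_iff _ _ (by rw [card_Pk, card_Pk])).mp
  intro r
  have := h r
  rw [sortedPrefix_perm_eq, sortedPrefix_perm_eq] at this
  exact this

lemma image_swap_Icc {a b k : ℕ} (ha1 : 1 ≤ a) (ha : a ≤ k) (hb1 : 1 ≤ b) (hb : b ≤ k) :
    (Finset.Icc 1 k).image ⇑(Equiv.swap a b) = Finset.Icc 1 k := by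
  apply Finset.eq_of_subset_of_card_le
  · intro y hy
    simp only [Finset.mem_image, Finset.mem_Icc] at hy ⊢
    obtain ⟨l, hl, rfl⟩ := hy
    rcases eq_or_ne l a with rfl | hla
    · rw [Equiv.swap_apply_left]; omega
    rcases eq_or_ne l b with rfl | hlb
    · rw [Equiv.swap_apply_right]; omega
    · rw [Equiv.swap_apply_of_ne_of_ne hla hlb]; omega
  · rw [Finset.card_image_of_injective _ (Equiv.injective _)]

lemma Pk_mul_swap_high (v : Equiv.Perm ℕ) {a b k : ℕ}
    (ha1 : 1 ≤ a) (ha : a ≤ k) (hb1 : 1 ≤ b) (hb : b ≤ k) :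
    Pk (v * Equiv.swap a b) k = Pk v k := by
  unfold Pk
  rw [Equiv.Perm.coe_mul, ← Finset.image_image, image_swap_Icc ha1 ha hb1 hb]

lemma Pk_mul_swap_low (v : Equiv.Perm ℕ) {a b k : ℕ} (ha : k < a) (hb : k < b) :
    Pk (v * Equiv.swap a b) k = Pk v k := by
  unfold Pk
  apply Finset.image_congr
  intro l hl
  simp only [Finset.coe_Icc, Set.mem_Icc] at hl
  rw [Equiv.Perm.mul_apply, Equiv.swap_apply_of_ne_of_ne (by omega) (by omega)]

/-- Proposition `lemma phin`. Let `u,v ∈ W(S_{2m+1})`, `u < v`,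
`i := pos(v)` and `pos(v) < pos(u)`.  Then `u ≤ z`, where `z = v·(i,i+2)` if
`v < v·(i+1,i+2)`, and `z = v·(i+1,i+2)` otherwise. -/
theorem join_irreducible_odd (m : ℕ) (hm : 1 ≤ m) (u v : Equiv.Perm ℕ)
    (hu : IsWachs (2*m+1) u) (hv : IsWachs (2*m+1) v)
    (huv : bruhatLT (2*m+1) u v)
    (hpos : pos (2*m+1) v < pos (2*m+1) u) :
    bruhatLE (2*m+1) u
      (if bruhatLT (2*m+1) v
          (v * Equiv.swap (pos (2*m+1) v + 1) (pos (2*m+1) v + 2))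
       then v * Equiv.swap (pos (2*m+1) v) (pos (2*m+1) v + 2)
       else v * Equiv.swap (pos (2*m+1) v + 1) (pos (2*m+1) v + 2)) := by
  have hvmem := pos_mem hv
  have humem := pos_mem hu
  simp only [Finset.mem_Icc] at hvmem humem
  set n := 2*m+1 with hndef
  set i := pos n v with hidef
  have hiodd : i % 2 = 1 := by rw [hidef, hndef]; exact pos_odd hv
  have huodd : pos n u % 2 = 1 := by rw [hndef]; exact pos_odd hu
  have hiu : i + 2 ≤ pos n u := by omega
  have hin : i + 2 ≤ n := by omega
  -- the pair at positions i+1, i+2 of v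
  have hvi : v i = n := apply_pos v
  have hxb : 1 ≤ v (i+1) ∧ v (i+1) ≤ 2*m+1 := apply_mem_Icc hv (by omega) (by omega)
  have hxne : v (i+1) ≠ n := by
    intro h
    have := eq_pos_of_apply h
    omega
  have hx2m : v (i+1) ≤ 2*m := by omega
  have hvinv : v⁻¹ (v (i+1)) = i + 1 := perm_inv_apply_self v (i+1)
  have hptn : v (i+2) = ptn (v (i+1)) := by
    have hw := wachs_partner hv hxb.1 hx2m
    rw [hvinv] at hw
    have hptnb := ptn_bounds (m := m) hxb.1 hx2m
    rcases hw with h | h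
    · have h' : v⁻¹ (ptn (v (i+1))) = i + 2 := by omega
      rw [← h', perm_apply_inv_self]
    · exfalso
      have hpi : v⁻¹ (ptn (v (i+1))) = i := by omega
      have h2 : v i = ptn (v (i+1)) := by
        conv_lhs => rw [← hpi]
        rw [perm_apply_inv_self]
      rw [hvi] at h2
      omega
  -- extract β
  obtain ⟨β, hβ2m, hcase⟩ :
      ∃ β, 2*β+2 ≤ 2*m ∧ ((v (i+1) = 2*β+1 ∧ v (i+2) = 2*β+2) ∨
        (v (i+1) = 2*β+2 ∧ v (i+2) = 2*β+1)) := by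
    by_cases hpar : v (i+1) % 2 = 0
    · refine ⟨(v (i+1) - 2)/2, by omega, Or.inr ⟨by omega, ?_⟩⟩
      rw [hptn]; unfold ptn; rw [if_pos hpar]; omega
    · refine ⟨(v (i+1) - 1)/2, ?_, Or.inl ⟨by omega, ?_⟩⟩
      · have : v (i+1) ≤ 2*m - 1 := by omega
        omega
      · rw [hptn]; unfold ptn; rw [if_neg hpar]; omega
  -- structural sets
  set Q := Pk v (i-1) with hQdef
  have hQPC : PairClosed Q := by
    have e : 2 * ((i-1)/2) = i - 1 := by omega
    have := pairClosed_Pk hv ((i-1)/2) (by rw [← hndef]; omega)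
    rw [e] at this
    exact this
  have hQ0 : 0 ∉ Q := zero_not_mem_Pk hv (by omega)
  have hnQ : n ∉ Q := by
    rw [hQdef, mem_Pk]
    rintro ⟨l, hl1, hl2, hl3⟩
    have := eq_pos_of_apply hl3
    omega
  have hb1Q : v (i+1) ∉ Q := by
    rw [hQdef, mem_Pk]
    rintro ⟨l, hl1, hl2, hl3⟩
    have := Equiv.injective v hl3
    omega
  have hb2Q : v (i+2) ∉ Q := by
    rw [hQdef, mem_Pk]
    rintro ⟨l, hl1, hl2, hl3⟩
    have := Equiv.injective v hl3
    omega
  have hPvi : Pk v i = insert n Q := by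
    have e : i - 1 + 1 = i := by omega
    have := Pk_succ v (i-1)
    rw [e] at this
    rw [this, hvi]
  have hPvi1 : Pk v (i+1) = insert (v (i+1)) (insert n Q) := by
    rw [Pk_succ, hPvi]
  -- the A-side sets
  have hAPC : PairClosed (Pk u (i+1)) := by
    have e : 2 * ((i+1)/2) = i + 1 := by omega
    have := pairClosed_Pk hu ((i+1)/2) (by rw [← hndef]; omega)
    rw [e] at this
    exact this
  have hA0 : 0 ∉ Pk u (i+1) := zero_not_mem_Pk hu (by omega)
  -- counts from u ≤ v
  have hcnt_i : ∀ t, cnt t (Pk u i) ≤ cnt t (insert n Q) := by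
    have := cnt_of_bruhat_at (fun r => huv.1 i (by simp only [Finset.mem_Icc]; omega) r)
    rw [hPvi] at this
    exact this
  have hcnt_i1 : ∀ t, cnt t (Pk u (i+1)) ≤ cnt t (insert (v (i+1)) (insert n Q)) := by
    have := cnt_of_bruhat_at (fun r => huv.1 (i+1) (by simp only [Finset.mem_Icc]; omega) r)
    rw [hPvi1] at this
    exact this
  -- handy membership facts
  have hb2n : 2*β+2 < n := by omega
  -- the swap permutations
  set s1 := Equiv.swap (i+1) (i+2) with hs1
  set s2 := Equiv.swap i (i+2) with hs2
  set vs := v * s1 with hvs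
  set z2 := v * s2 with hz2
  -- prefix sets of vs
  have hvs_low : ∀ k, k ≤ i → Pk vs k = Pk v k := fun k hk =>
    Pk_mul_swap_low v (by omega) (by omega)
  have hvs_high : ∀ k, i + 2 ≤ k → Pk vs k = Pk v k := fun k hk =>
    Pk_mul_swap_high v (by omega) (by omega) (by omega) (by omega)
  have hvs_i1 : Pk vs (i+1) = insert (v (i+2)) (insert n Q) := by
    rw [Pk_succ, hvs_low i (le_refl _), hPvi]
    congr 1
    rw [hvs, Equiv.Perm.mul_apply, hs1, Equiv.swap_apply_left]
  -- prefix sets of z2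
  have hz2_low : ∀ k, k < i → Pk z2 k = Pk v k := fun k hk =>
    Pk_mul_swap_low v (by omega) (by omega)
  have hz2_high : ∀ k, i + 2 ≤ k → Pk z2 k = Pk v k := fun k hk =>
    Pk_mul_swap_high v (by omega) (by omega) (by omega) (by omega)
  have hz2_i : Pk z2 i = insert (v (i+2)) Q := by
    have e : i - 1 + 1 = i := by omega
    have h1 := Pk_succ z2 (i-1)
    rw [e] at h1
    rw [h1, hz2_low (i-1) (by omega), ← hQdef]
    congr 1
    rw [hz2, Equiv.Perm.mul_apply, hs2, Equiv.swap_apply_left]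
  have hz2_i1 : Pk z2 (i+1) = insert (v (i+1)) (insert (v (i+2)) Q) := by
    rw [Pk_succ, hz2_i]
    congr 1
    rw [hz2, Equiv.Perm.mul_apply, hs2,
      Equiv.swap_apply_of_ne_of_ne (by omega) (by omega)]
  -- non-membership for cnt computations
  have hb1_in_nQ : v (i+1) ∉ insert n Q := by
    simp only [Finset.mem_insert]
    push_neg
    exact ⟨hxne, hb1Q⟩
  have hb2_in_nQ : v (i+2) ∉ insert n Q := by
    simp only [Finset.mem_insert]
    push_neg
    constructor
    · rcases hcase with ⟨h1, h2⟩ | ⟨h1, h2⟩ <;> omega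
    · exact hb2Q
  -- CASE A : v(i+1) = 2β+1 < v(i+2) = 2β+2
  -- CASE B : v(i+1) = 2β+2 > v(i+2) = 2β+1
  -- the if-condition holds exactly in case A
  have hltA : (v (i+1) = 2*β+1 ∧ v (i+2) = 2*β+2) → bruhatLT n v vs := by
    rintro ⟨hA1, hA2⟩
    constructor
    · intro k hk r
      simp only [Finset.mem_Icc] at hk
      rcases lt_or_ge k (i+1) with hki | hki
      · have heq : Pk vs k = Pk v k := hvs_low k (by omega)
        apply bruhat_at_of_cnt (u := v) (z := vs)
        rw [heq]
        intro t; exact le_refl _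
      rcases eq_or_lt_of_le hki with rfl | hki2
      · apply bruhat_at_of_cnt
        rw [hvs_i1, hPvi1, hA1, hA2]
        intro t
        rw [cnt_insert2 t _ _ Q (by rw [← hA1]; exact hb1_in_nQ) hnQ,
          cnt_insert2 t _ _ Q (by rw [← hA2]; exact hb2_in_nQ) hnQ]
        have : (if t ≤ 2*β+1 then (1:ℕ) else 0) ≤ (if t ≤ 2*β+2 then 1 else 0) := by
          split_ifs <;> omega
        omega
      · have heq : Pk vs k = Pk v k := hvs_high k (by omega)
        apply bruhat_at_of_cnt (u := v) (z := vs)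
        rw [heq]
        intro t; exact le_refl _
    · intro h
      have h2 : v (i+1) = vs (i+1) := by rw [← h]
      rw [hvs, Equiv.Perm.mul_apply, hs1, Equiv.swap_apply_left] at h2
      have := Equiv.injective v h2
      omega
  have hnltB : (v (i+1) = 2*β+2 ∧ v (i+2) = 2*β+1) → ¬ bruhatLT n v vs := by
    rintro ⟨hB1, hB2⟩ ⟨hle, -⟩
    have hc := cnt_of_bruhat_at (fun r => hle (i+1) (by simp only [Finset.mem_Icc]; omega) r)
    have := hc (2*β+2)
    rw [hvs_i1, hPvi1, hB1, hB2,
      cnt_insert2 _ _ _ Q (by rw [← hB1]; exact hb1_in_nQ) hnQ,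
      cnt_insert2 _ _ _ Q (by rw [← hB2]; exact hb2_in_nQ) hnQ,
      if_pos (by omega : (2*β+2:ℕ) ≤ 2*β+2), if_pos (by omega : 2*β+2 ≤ n),
      if_neg (by omega : ¬ ((2*β+2:ℕ) ≤ 2*β+1))] at this
    omega
  -- main inequalities
  have hgoalA : (v (i+1) = 2*β+1 ∧ v (i+2) = 2*β+2) → bruhatLE n u z2 := by
    rintro ⟨hA1, hA2⟩
    have hb1Q' : 2*β+1 ∉ Q := by rw [← hA1]; exact hb1Q
    have hb2Q' : 2*β+2 ∉ Q := by rw [← hA2]; exact hb2Q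
    have hcA : ∀ t, cnt t (Pk u (i+1)) ≤ cnt t (insert (2*β+1) (insert (2*β+2) Q)) := by
      apply caseA_count hAPC hA0 hQPC hQ0 hb1Q' hb2Q' hnQ hb2n
      intro t
      have := hcnt_i1 t
      rw [hA1] at this
      exact this
    have hcAi : ∀ t, cnt t (Pk u i) ≤ cnt t (insert (2*β+2) Q) := by
      apply caseAi_count (Pk_subset u (by omega : i ≤ i+1)) hb1Q' hb2Q' hnQ hb2n hcnt_i hcA
    intro k hk r
    simp only [Finset.mem_Icc] at hk
    rcases lt_or_ge k i with hki | hki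
    · have heq : Pk z2 k = Pk v k := hz2_low k hki
      have h1 := huv.1 k (by simp only [Finset.mem_Icc]; omega) r
      rw [sortedPrefix_perm_eq u, sortedPrefix_perm_eq v] at h1
      rw [sortedPrefix_perm_eq u, sortedPrefix_perm_eq z2, heq]
      exact h1
    rcases eq_or_lt_of_le hki with rfl | hki2
    · apply bruhat_at_of_cnt
      rw [hz2_i, hA2]
      exact hcAi
    rcases eq_or_lt_of_le (by omega : i + 1 ≤ k) with rfl | hki3
    · apply bruhat_at_of_cnt
      rw [hz2_i1, hA1, hA2]
      exact hcA
    · have heq : Pk z2 k = Pk v k := hz2_high k (by omega)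
      have h1 := huv.1 k (by simp only [Finset.mem_Icc]; omega) r
      rw [sortedPrefix_perm_eq u, sortedPrefix_perm_eq v] at h1
      rw [sortedPrefix_perm_eq u, sortedPrefix_perm_eq z2, heq]
      exact h1
  have hgoalB : (v (i+1) = 2*β+2 ∧ v (i+2) = 2*β+1) → bruhatLE n u vs := by
    rintro ⟨hB1, hB2⟩
    have hb1Q' : 2*β+1 ∉ Q := by rw [← hB2]; exact hb2Q
    have hb2Q' : 2*β+2 ∉ Q := by rw [← hB1]; exact hb1Q
    have hcB : ∀ t, cnt t (Pk u (i+1)) ≤ cnt t (insert (2*β+1) (insert n Q)) := by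
      apply caseB_count hAPC hA0 hQPC hQ0 hb1Q' hb2Q' hnQ hb2n
      intro t
      have := hcnt_i1 t
      rw [hB1] at this
      exact this
    intro k hk r
    simp only [Finset.mem_Icc] at hk
    rcases lt_or_ge k (i+1) with hki | hki
    · have heq : Pk vs k = Pk v k := hvs_low k (by omega)
      have h1 := huv.1 k (by simp only [Finset.mem_Icc]; omega) r
      rw [sortedPrefix_perm_eq u, sortedPrefix_perm_eq v] at h1
      rw [sortedPrefix_perm_eq u, sortedPrefix_perm_eq vs, heq]
      exact h1
    rcases eq_or_lt_of_le hki with rfl | hki2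
    · apply bruhat_at_of_cnt
      rw [hvs_i1, hB2]
      exact hcB
    · have heq : Pk vs k = Pk v k := hvs_high k (by omega)
      have h1 := huv.1 k (by simp only [Finset.mem_Icc]; omega) r
      rw [sortedPrefix_perm_eq u, sortedPrefix_perm_eq v] at h1
      rw [sortedPrefix_perm_eq u, sortedPrefix_perm_eq vs, heq]
      exact h1
  -- assemble
  split_ifs with hcond
  · rcases hcase with hc1 | hc2
    · exact hgoalA hc1
    · exact absurd hcond (hnltB hc2)
  · rcases hcase with hc1 | hc2
    · exact absurd (hltA hc1) hcond
    · exact hgoalB hc2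


end WachsPaper
end
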